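/- arXiv:1808.00595 — 8 statements merged into one kernel-verified Lean document; each statement's English description precedes it below -/
import Mathlib

section
/- Suppose n is odd and assumption (A6) holds. Then the generalized n-gene repressilator has exactly one steady state in (0,∞)^{2n} (the central steady state E_C). -/
/-- A steady state of the generalized `n`-gene repressilator with transcription-rate
functions `a i`, mRNA degradation-rate functions `dr i`, protein degradation-rate
functions `dp i`, and translation-rate functions `k i`: a point
`(r, p) ∈ (0,∞)^{2n}` with `dr i (r i) = a i (p (i-1))` and `dp i (p i) = k i (r i)`
for all `i` (indices mod `n`). -/
def IsSteadyState (n : ℕ) [NeZero n] (a dr dp k : Fin n → ℝ → ℝ)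
    (r p : Fin n → ℝ) : Prop :=
  (∀ i, 0 < r i) ∧ (∀ i, 0 < p i) ∧
    (∀ i, dr i (r i) = a i (p (i - 1))) ∧ (∀ i, dp i (p i) = k i (r i))

/-!
Gene `i` turns the repressor level `q = p (i - 1)` into its own levels: solving
`dr i r = a i q` and then `dp i p = k i r` gives `r = R i q` and `p = F i q`, where (A6) makes
the second equation solvable on the whole range of `k i ∘ R i`. Inverses of continuous strictly
increasing maps on compact intervals are continuous, so `F i` is continuous, positive and
strictly decreasing on `[0, ∞)`. Steady states are then exactly the positive solutions of the
cyclic recurrence `p i = F i (p (i - 1))`, i.e. the orbits of fixed points of the composite of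
the `F i` around the cycle. For odd `n` this composite is strictly decreasing, and a continuous
strictly decreasing self-map of `[0, ∞)` has exactly one fixed point.
-/

open Set Function

theorem StrictMonoOn.exists_continuous_leftInvOn_Icc {α β : Type*}
    [ConditionallyCompleteLinearOrder α] [TopologicalSpace α] [OrderTopology α] [DenselyOrdered α]
    [LinearOrder β] [TopologicalSpace β] [OrderTopology β] {f : α → β} {a b : α}
    (hab : a ≤ b) (hf : ContinuousOn f (Icc a b)) (hmono : StrictMonoOn f (Icc a b)) :
    ∃ g : β → α, Continuous g ∧ MapsTo g (Icc (f a) (f b)) (Icc a b) ∧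
      LeftInvOn f g (Icc (f a) (f b)) := by
  have hmaps : MapsTo f (Icc a b) (Icc (f a) (f b)) := fun x hx =>
    ⟨hmono.monotoneOn (left_mem_Icc.2 hab) hx hx.1, hmono.monotoneOn hx (right_mem_Icc.2 hab) hx.2⟩
  have hbij : BijOn f (Icc a b) (Icc (f a) (f b)) :=
    ⟨hmaps, hmono.injOn, intermediate_value_Icc hab hf⟩
  let e : Icc a b ≃ₜ Icc (f a) (f b) :=
    (hf.mapsToRestrict hmaps).homeoOfEquivCompactToT2 (f := hbij.equiv)
  refine ⟨IccExtend (hmaps (left_mem_Icc.2 hab)).2 (Subtype.val ∘ e.symm),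
    (continuous_subtype_val.comp e.symm.continuous).Icc_extend', fun y hy => ?_, fun y hy => ?_⟩
  · rw [IccExtend_of_mem _ _ hy]
    exact (e.symm _).2
  · rw [IccExtend_of_mem _ _ hy]
    exact congrArg Subtype.val (e.apply_symm_apply ⟨y, hy⟩)

theorem StrictAntiOn.existsUnique_isFixedPt_Ici {α : Type*} [ConditionallyCompleteLinearOrder α]
    [TopologicalSpace α] [OrderTopology α] [DenselyOrdered α] {f : α → α} {a : α}
    (hf : ContinuousOn f (Ici a)) (hanti : StrictAntiOn f (Ici a))
    (hmaps : MapsTo f (Ici a) (Ici a)) :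
    ∃! x ∈ Ici a, IsFixedPt f x := by
  have ha : a ∈ Ici a := self_mem_Ici
  -- `f` is antitone, so `[a, f a]` is mapped into itself
  obtain ⟨x, hx, hfx⟩ := exists_mem_Icc_isFixedPt_of_mapsTo (hf.mono Icc_subset_Ici_self) (hmaps ha)
    fun y hy => ⟨hmaps hy.1, hanti.antitoneOn ha hy.1 hy.1⟩
  refine ⟨x, ⟨hx.1, hfx⟩, fun y ⟨hy, hfy⟩ => ?_⟩
  have not_lt_of_isFixedPt : ∀ u ∈ Ici a, ∀ v ∈ Ici a, IsFixedPt f u → IsFixedPt f v → ¬ u < v :=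
    fun u hu v hv hfu hfv huv => (hanti hu hv huv).not_gt (by rwa [hfu.eq, hfv.eq])
  exact le_antisymm (not_lt.1 (not_lt_of_isFixedPt _ hx.1 _ hy hfx hfy))
    (not_lt.1 (not_lt_of_isFixedPt _ hy _ hx.1 hfy hfx))

section Cycle

open Fin.NatCast

variable {α : Type*} {n : ℕ} [NeZero n]

/-- `cycleIterate F j q` is `p j` for the solution of `p i = F i (p (i - 1))` with `p 0 = q`,
the index `j : ℕ` being read modulo `n`. -/
def cycleIterate (F : Fin n → α → α) : ℕ → α → α
  | 0 => id
  | j + 1 => F (j + 1 : ℕ) ∘ cycleIterate F j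

variable {F : Fin n → α → α}

@[simp] lemma cycleIterate_zero (q : α) : cycleIterate F 0 q = q := rfl

@[simp] lemma cycleIterate_succ (j : ℕ) (q : α) :
    cycleIterate F (j + 1) q = F (j + 1 : ℕ) (cycleIterate F j q) := rfl

lemma Fin.natCast_succ_sub_one (j : ℕ) : (((j + 1 : ℕ) : Fin n) - 1) = j := by
  rw [Nat.cast_succ, add_sub_cancel_right]

lemma eq_cycleIterate_of_forall_eq {p : Fin n → α} (hp : ∀ i, p i = F i (p (i - 1))) (j : ℕ) :
    p j = cycleIterate F j (p 0) := by
  induction j with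
  | zero => simp
  | succ j ih => rw [hp, Fin.natCast_succ_sub_one, ih, cycleIterate_succ]

lemma isFixedPt_cycleIterate_of_forall_eq {p : Fin n → α} (hp : ∀ i, p i = F i (p (i - 1))) :
    IsFixedPt (cycleIterate F n) (p 0) := by
  rw [IsFixedPt, ← eq_cycleIterate_of_forall_eq hp, Fin.natCast_self]

lemma periodic_cycleIterate {q : α} (hq : IsFixedPt (cycleIterate F n) q) :
    Periodic (cycleIterate F · q) n := by
  intro j
  induction j with
  | zero => simpa using hq.eq
  | succ j ih => simp [Nat.add_right_comm j 1 n, ih]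

lemma cycleIterate_val_of_isFixedPt {q : α} (hq : IsFixedPt (cycleIterate F n) q) (i : Fin n) :
    cycleIterate F i q = F i (cycleIterate F (i - 1 : Fin n) q) := by
  have hcast (j : ℕ) : cycleIterate F (j : Fin n) q = cycleIterate F j q := by
    rw [Fin.val_natCast, (periodic_cycleIterate hq).map_mod_nat]
  obtain ⟨j, rfl⟩ : ∃ j : ℕ, ((j + 1 : ℕ) : Fin n) = i :=
    ⟨i + (n - 1), by rw [add_assoc, Nat.sub_add_cancel NeZero.one_le]; simp⟩
  rw [Fin.natCast_succ_sub_one, hcast, hcast, cycleIterate_succ]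

variable {s : Set α}

lemma mapsTo_cycleIterate (hF : ∀ i, MapsTo (F i) s s) (j : ℕ) : MapsTo (cycleIterate F j) s s := by
  induction j with
  | zero => exact mapsTo_id s
  | succ j ih => exact (hF _).comp ih

lemma continuousOn_cycleIterate [TopologicalSpace α] (hF : ∀ i, ContinuousOn (F i) s)
    (hFs : ∀ i, MapsTo (F i) s s) (j : ℕ) : ContinuousOn (cycleIterate F j) s := by
  induction j with
  | zero => exact continuousOn_id
  | succ j ih => exact (hF _).comp ih (mapsTo_cycleIterate hFs j)

lemma strictAntiOn_cycleIterate_of_odd [Preorder α] (hF : ∀ i, StrictAntiOn (F i) s)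
    (hFs : ∀ i, MapsTo (F i) s s) {j : ℕ} (hj : Odd j) : StrictAntiOn (cycleIterate F j) s := by
  obtain ⟨m, rfl⟩ := hj
  have hmono : ∀ m, StrictMonoOn (cycleIterate F (2 * m)) s := by
    intro m
    induction m with
    | zero => exact strictMonoOn_id
    | succ m ih =>
      exact ((hF _).comp (hF _) (hFs _)).comp ih (mapsTo_cycleIterate hFs _)
  exact (hF _).comp_strictMonoOn (hmono m) (mapsTo_cycleIterate hFs _)

theorem existsUnique_cyclic_of_existsUnique_isFixedPt (hFs : ∀ i, MapsTo (F i) s s)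
    (h : ∃! q ∈ s, IsFixedPt (cycleIterate F n) q) :
    ∃! p : Fin n → α, (∀ i, p i ∈ s) ∧ ∀ i, p i = F i (p (i - 1)) := by
  obtain ⟨q, ⟨hqs, hq⟩, hq_unique⟩ := h
  refine ⟨fun i => cycleIterate F i q, ⟨fun i => mapsTo_cycleIterate hFs _ hqs,
    cycleIterate_val_of_isFixedPt hq⟩, ?_⟩
  rintro p ⟨hps, hp⟩
  have hp0 : p 0 = q := hq_unique _ ⟨hps 0, isFixedPt_cycleIterate_of_forall_eq hp⟩
  funext i
  rw [← hp0, ← eq_cycleIterate_of_forall_eq hp, Fin.cast_val_eq_self]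

end Cycle

theorem exists_strictAntiOn_inverse_comp {f u : ℝ → ℝ} {B : ℝ} (hB : 0 ≤ B)
    (hf : ContinuousOn f (Ici 0)) (hf_mono : StrictMonoOn f (Ici 0)) (hf0 : f 0 = 0)
    (hu : ContinuousOn u (Ici 0)) (hu_anti : StrictAntiOn u (Ici 0))
    (hu_maps : MapsTo u (Ici 0) (Ioc 0 (f B))) :
    ∃ v : ℝ → ℝ, ContinuousOn v (Ici 0) ∧ StrictAntiOn v (Ici 0) ∧ MapsTo v (Ici 0) (Ioc 0 B) ∧
      ∀ q ≥ 0, ∀ x ≥ 0, f x = u q ↔ x = v q := by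
  obtain ⟨g, hg, hg_maps, hg_inv⟩ :=
    (hf_mono.mono Icc_subset_Ici_self).exists_continuous_leftInvOn_Icc hB
      (hf.mono Icc_subset_Ici_self)
  rw [hf0] at hg_maps hg_inv
  have hu_Icc : MapsTo u (Ici 0) (Icc 0 (f B)) := hu_maps.mono_right Ioc_subset_Icc_self
  have hg_mono : StrictMonoOn g (Icc 0 (f B)) := fun y hy y' hy' hlt => by
    by_contra! hle
    have := hf_mono.monotoneOn (hg_maps hy').1 (hg_maps hy).1 hle
    rw [hg_inv hy, hg_inv hy'] at this
    exact hlt.not_ge this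
  refine ⟨g ∘ u, hg.comp_continuousOn hu, hg_mono.comp_strictAntiOn hu_anti hu_Icc,
    fun q hq => ⟨(hg_maps (hu_Icc hq)).1.lt_of_ne fun h0 => ?_, (hg_maps (hu_Icc hq)).2⟩,
    fun q hq x hx => ⟨fun h => ?_, fun h => h ▸ hg_inv (hu_Icc hq)⟩⟩
  · have := hg_inv (hu_Icc hq)
    rw [← h0, hf0] at this
    exact (hu_maps hq).1.ne this
  · exact hf_mono.injOn hx (hg_maps (hu_Icc hq)).1 (h.trans (hg_inv (hu_Icc hq)).symm)

/-- `R q` and `F q` are the mRNA and protein levels of a gene whose repressor has level `q`. -/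
theorem exists_gene_response {a dr dp k : ℝ → ℝ} {rbar X : ℝ}
    (ha : ContinuousOn a (Ici 0)) (ha_nonneg : ∀ x ≥ (0 : ℝ), 0 ≤ a x)
    (ha_anti : StrictAntiOn a (Ici 0)) (hdr : ContinuousOn dr (Ici 0))
    (hdp : ContinuousOn dp (Ici 0)) (hk : ContinuousOn k (Ici 0))
    (hdr0 : dr 0 = 0) (hdp0 : dp 0 = 0) (hk0 : k 0 = 0) (hdr_mono : StrictMonoOn dr (Ici 0))
    (hdp_mono : StrictMonoOn dp (Ici 0)) (hk_mono : StrictMonoOn k (Ici 0))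
    (hrbar : 0 ≤ rbar) (hdr_rbar : dr rbar = a 0) (hX : 0 ≤ X) (hdp_X : k rbar ≤ dp X) :
    ∃ R F : ℝ → ℝ, MapsTo R (Ici 0) (Ioi 0) ∧ ContinuousOn F (Ici 0) ∧
      StrictAntiOn F (Ici 0) ∧ MapsTo F (Ici 0) (Ioi 0) ∧
      ∀ q ≥ 0, ∀ r ≥ 0, ∀ p ≥ 0, (dr r = a q ∧ dp p = k r ↔ r = R q ∧ p = F q) := by
  have ha_maps : MapsTo a (Ici 0) (Ioc 0 (dr rbar)) := fun q (hq : 0 ≤ q) => by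
    have hq1 : (0 : ℝ) ≤ q + 1 := by linarith
    exact ⟨(ha_nonneg _ hq1).trans_lt (ha_anti hq hq1 (lt_add_one q)),
      hdr_rbar ▸ ha_anti.antitoneOn self_mem_Ici hq hq⟩
  obtain ⟨R, hR, hR_anti, hR_maps, hR_solve⟩ :=
    exists_strictAntiOn_inverse_comp hrbar hdr hdr_mono hdr0 ha ha_anti ha_maps
  have hR_Ici : MapsTo R (Ici 0) (Ici 0) := fun q hq => (hR_maps hq).1.le
  have hkR_maps : MapsTo (k ∘ R) (Ici 0) (Ioc 0 (dp X)) := fun q hq =>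
    ⟨hk0 ▸ hk_mono self_mem_Ici (hR_Ici hq) (hR_maps hq).1,
      (hk_mono.monotoneOn (hR_Ici hq) hrbar (hR_maps hq).2).trans hdp_X⟩
  obtain ⟨F, hF, hF_anti, hF_maps, hF_solve⟩ :=
    exists_strictAntiOn_inverse_comp hX hdp hdp_mono hdp0 (hk.comp hR hR_Ici)
      (hk_mono.comp_strictAntiOn hR_anti hR_Ici) hkR_maps
  refine ⟨R, F, hR_maps.mono_right Ioc_subset_Ioi_self, hF, hF_anti,
    hF_maps.mono_right Ioc_subset_Ioi_self, fun q hq r hr p hp => ?_⟩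
  rw [hR_solve q hq r hr]
  exact and_congr_right fun hrR => by subst hrR; exact hF_solve q hq p hp

theorem odd_unique_steady_state_general (n : ℕ) [NeZero n] (hn : Odd n)
    (a dr dp k : Fin n → ℝ → ℝ)
    (hA1 : ∀ i, ContDiffOn ℝ 1 (a i) (Set.Ici 0))
    (hA2 : ∀ i, ∀ x ≥ (0 : ℝ), 0 ≤ a i x)
    (hA3 : ∀ i, StrictAntiOn (a i) (Set.Ici 0))
    (hD1 : ∀ i, ContDiffOn ℝ 1 (dr i) (Set.Ici 0) ∧ ContDiffOn ℝ 1 (dp i) (Set.Ici 0) ∧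
      ContDiffOn ℝ 1 (k i) (Set.Ici 0))
    (hD2 : ∀ i, dr i 0 = 0 ∧ dp i 0 = 0 ∧ k i 0 = 0)
    (hD3 : ∀ i, StrictMonoOn (dr i) (Set.Ici 0) ∧ StrictMonoOn (dp i) (Set.Ici 0) ∧
      StrictMonoOn (k i) (Set.Ici 0))
    -- `rbar i` is the unique point in `(0,∞)` with `dr i (rbar i) = a i 0`
    (rbar : Fin n → ℝ) (hrbar_pos : ∀ i, 0 < rbar i)
    (hrbar : ∀ i, dr i (rbar i) = a i 0)
    -- (A6): `sup dr i > a i 0` and `sup dp i > k i (rbar i)`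
    (hA6 : ∀ i, (∃ x ≥ (0 : ℝ), dr i x > a i 0) ∧ (∃ x ≥ (0 : ℝ), dp i x > k i (rbar i))) :
    ∃! rp : (Fin n → ℝ) × (Fin n → ℝ), IsSteadyState n a dr dp k rp.1 rp.2 := by
  choose X hX hdp_X using fun i => (hA6 i).2
  choose R F hR hF hF_anti hF_maps hsolve using fun i =>
    exists_gene_response (hA1 i).continuousOn (hA2 i) (hA3 i) (hD1 i).1.continuousOn
      (hD1 i).2.1.continuousOn (hD1 i).2.2.continuousOn (hD2 i).1 (hD2 i).2.1 (hD2 i).2.2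
      (hD3 i).1 (hD3 i).2.1 (hD3 i).2.2 (hrbar_pos i).le (hrbar i) (hX i) (hdp_X i).le
  have hF_Ici i : MapsTo (F i) (Ici 0) (Ici 0) := (hF_maps i).mono_right Ioi_subset_Ici_self
  obtain ⟨p, ⟨hp_nonneg, hp⟩, hp_unique⟩ := existsUnique_cyclic_of_existsUnique_isFixedPt hF_Ici
    (StrictAntiOn.existsUnique_isFixedPt_Ici (continuousOn_cycleIterate hF hF_Ici n)
      (strictAntiOn_cycleIterate_of_odd hF_anti hF_Ici hn) (mapsTo_cycleIterate hF_Ici n))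
  have hstate i := ((hsolve i _ (hp_nonneg (i - 1)) _ (hR i (hp_nonneg _)).le _ (hp_nonneg i)).2
    ⟨rfl, hp i⟩)
  have hp_pos i : 0 < p i := hp i ▸ hF_maps i (hp_nonneg _)
  refine ⟨(fun i => R i (p (i - 1)), p), ⟨fun i => hR i (hp_nonneg _), hp_pos,
    fun i => (hstate i).1, fun i => (hstate i).2⟩, ?_⟩
  rintro ⟨r', p'⟩ ⟨hr', hp', hdr, hdp⟩
  have hsolved i := (hsolve i _ (hp' (i - 1)).le _ (hr' i).le _ (hp' i).le).1 ⟨hdr i, hdp i⟩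
  obtain rfl : p' = p := hp_unique p' ⟨fun i => (hp' i).le, fun i => (hsolved i).2⟩
  exact Prod.ext (funext fun i => (hsolved i).1) rfl

/-- For `n` odd, under the standing assumptions (A1)–(A4) on the transcription-rate
functions, (D1)–(D3) on the degradation- and translation-rate functions, and
assumption (A6), the generalized `n`-gene repressilator has exactly one steady
state in `(0,∞)^{2n}` (the central steady state `E_C`). -/
theorem odd_unique_steady_state (n : ℕ) [NeZero n] (hn : Odd n)
    (a dr dp k : Fin n → ℝ → ℝ)
    (hA1 : ∀ i, ContDiffOn ℝ 1 (a i) (Set.Ici 0))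
    (hA2 : ∀ i, ∀ x ≥ (0 : ℝ), 0 ≤ a i x)
    (hA3 : ∀ i, StrictAntiOn (a i) (Set.Ici 0))
    (hA4 : ∀ i, 0 < a i 0)
    (hD1 : ∀ i, ContDiffOn ℝ 1 (dr i) (Set.Ici 0) ∧ ContDiffOn ℝ 1 (dp i) (Set.Ici 0) ∧
      ContDiffOn ℝ 1 (k i) (Set.Ici 0))
    (hD2 : ∀ i, dr i 0 = 0 ∧ dp i 0 = 0 ∧ k i 0 = 0)
    (hD3 : ∀ i, StrictMonoOn (dr i) (Set.Ici 0) ∧ StrictMonoOn (dp i) (Set.Ici 0) ∧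
      StrictMonoOn (k i) (Set.Ici 0))
    -- `rbar i` is the unique point in `(0,∞)` with `dr i (rbar i) = a i 0`
    (rbar : Fin n → ℝ) (hrbar_pos : ∀ i, 0 < rbar i)
    (hrbar : ∀ i, dr i (rbar i) = a i 0)
    -- (A6): `sup dr i > a i 0` and `sup dp i > k i (rbar i)`
    (hA6 : ∀ i, (∃ x ≥ (0 : ℝ), dr i x > a i 0) ∧ (∃ x ≥ (0 : ℝ), dp i x > k i (rbar i))) :
    ∃! rp : (Fin n → ℝ) × (Fin n → ℝ), IsSteadyState n a dr dp k rp.1 rp.2 :=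
  odd_unique_steady_state_general n hn a dr dp k hA1 hA2 hA3 hD1 hD2 hD3 rbar hrbar_pos hrbar hA6
end

section
/- Suppose n is even and assumptions (A5), (A6), and (D4) hold. Then the generalized n-gene repressilator has at least one steady state in (0,∞)^{2n} (the central steady state E_C exists). -/
open Set Function

theorem StrictMonoOn.strictMonoOn_invFunOn {α β : Type*} [LinearOrder α] [Preorder β] [Nonempty α]
    {f : α → β} {s : Set α} (hf : StrictMonoOn f s) : StrictMonoOn (invFunOn f s) (f '' s) := by
  rintro _ ⟨x, hx, rfl⟩ _ ⟨y, hy, rfl⟩ hxy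
  rw [hf.injOn.leftInvOn_invFunOn hx, hf.injOn.leftInvOn_invFunOn hy]
  exact (hf.lt_iff_lt hx hy).1 hxy

theorem Monotone.exists_isFixedPt_of_mapsTo_Icc {α : Type*} [ConditionallyCompleteLattice α]
    {F : α → α} (hF : Monotone F) {a b : α} (hab : a ≤ b) (hmaps : MapsTo F (Icc a b) (Icc a b)) :
    ∃ x, IsFixedPt F x := by
  have : Fact (a ≤ b) := ⟨hab⟩
  let G : Icc a b →o Icc a b := ⟨hmaps.restrict, fun _ _ hxy ↦ hF hxy⟩
  exact ⟨G.lfp, congrArg Subtype.val G.isFixedPt_lfp⟩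

section CyclicSystem

variable {α : Type*} {n : ℕ} [NeZero n]

open Fin.NatCast in
/-- Applies `S 0, S 1, …, S (m - 1)` in turn to `x`, indices taken mod `n`. -/
def cyclicOrbit (S : Fin n → α → α) (x : α) : ℕ → α
  | 0 => x
  | m + 1 => S m (cyclicOrbit S x m)

theorem monotone_cyclicOrbit_of_even [Preorder α] {S : Fin n → α → α} (hS : ∀ i, Antitone (S i))
    {m : ℕ} (hm : Even m) : Monotone (cyclicOrbit S · m) := by
  obtain ⟨j, rfl⟩ := hm
  induction j with
  | zero => exact monotone_id
  | succ j ih =>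
    rw [show j + 1 + (j + 1) = j + j + 1 + 1 by ring]
    exact (hS _).comp ((hS _).comp_monotone ih)

theorem cyclicOrbit_val_sub_one_add_one {S : Fin n → α → α} {x : α}
    (hx : IsFixedPt (cyclicOrbit S · n) x) (i : Fin n) :
    cyclicOrbit S x ((i - 1 : Fin n) + 1) = cyclicOrbit S x i := by
  obtain ⟨m, rfl⟩ := Nat.exists_eq_succ_of_ne_zero (NeZero.ne n)
  rw [Fin.coe_sub_one]
  split_ifs with hi
  · subst hi
    exact hx
  · rw [Nat.sub_add_cancel (Nat.one_le_iff_ne_zero.2 (Fin.val_ne_zero_iff.2 hi))]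

theorem exists_eq_apply_sub_one_of_antitone [ConditionallyCompleteLattice α] (hn : Even n)
    {S : Fin n → α → α} (hS : ∀ i, Antitone (S i)) {a b : α} (hSab : ∀ i x, S i x ∈ Icc a b) :
    ∃ p : Fin n → α, ∀ i, p i = S i (p (i - 1)) := by
  have hmaps : MapsTo (cyclicOrbit S · n) (Icc a b) (Icc a b) := fun y _ ↦ by
    obtain ⟨m, rfl⟩ := Nat.exists_eq_succ_of_ne_zero (NeZero.ne n)
    exact hSab _ _
  obtain ⟨x, hx⟩ := (monotone_cyclicOrbit_of_even hS hn).exists_isFixedPt_of_mapsTo_Icc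
    ((hSab 0 a).1.trans (hSab 0 a).2) hmaps
  refine ⟨fun i ↦ cyclicOrbit S x (i + 1), fun i ↦ ?_⟩
  dsimp only
  rw [cyclicOrbit_val_sub_one_add_one hx, cyclicOrbit, Fin.cast_val_eq_self]

end CyclicSystem

/-- Assumptions (D1)–(D3) on a degradation rate, with continuity in place of `C¹`. -/
structure IsRateFunction (f : ℝ → ℝ) : Prop where
  continuousOn : ContinuousOn f (Ici 0)
  strictMonoOn : StrictMonoOn f (Ici 0)
  map_zero : f 0 = 0

namespace IsRateFunction

variable {f : ℝ → ℝ} {c X : ℝ}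

theorem mem_image_of_mem_Icc (hf : IsRateFunction f) (hX : 0 ≤ X) (hc : c ∈ Icc 0 (f X)) :
    c ∈ f '' Ici 0 := by
  have hivt := intermediate_value_Icc hX (hf.continuousOn.mono Icc_subset_Ici_self)
  rw [hf.map_zero] at hivt
  exact image_mono Icc_subset_Ici_self (hivt hc)

theorem invFunOn_pos (hf : IsRateFunction f) (hc : c ∈ f '' Ici 0) (hc0 : 0 < c) :
    0 < invFunOn f (Ici 0) c := by
  have hg0 : invFunOn f (Ici 0) (f 0) = 0 := hf.strictMonoOn.injOn.leftInvOn_invFunOn self_mem_Ici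
  rw [hf.map_zero] at hg0
  have hlt := hf.strictMonoOn.strictMonoOn_invFunOn ⟨0, self_mem_Ici, hf.map_zero⟩ hc
    (hf.map_zero ▸ hc0)
  rwa [hg0] at hlt

theorem invFunOn_le (hf : IsRateFunction f) (hX : 0 ≤ X) (hc : c ∈ f '' Ici 0) (hcX : c ≤ f X) :
    invFunOn f (Ici 0) c ≤ X := by
  have hle := hf.strictMonoOn.strictMonoOn_invFunOn.monotoneOn hc (mem_image_of_mem f hX) hcX
  rwa [hf.strictMonoOn.injOn.leftInvOn_invFunOn (mem_Ici.2 hX)] at hle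

end IsRateFunction

structure GeneHypotheses (a dr dp k : ℝ → ℝ) (rbar : ℝ) : Prop where
  a_nonneg : ∀ x ≥ 0, 0 ≤ a x
  a_strictAntiOn : StrictAntiOn a (Ici 0)
  isRateFunction_dr : IsRateFunction dr
  isRateFunction_dp : IsRateFunction dp
  k_strictMonoOn : StrictMonoOn k (Ici 0)
  k_zero : k 0 = 0
  rbar_nonneg : 0 ≤ rbar
  dr_rbar : dr rbar = a 0
  exists_k_rbar_lt_dp : ∃ Y ≥ 0, k rbar < dp Y

/-- Negative `x` is read as `0`, which makes `mrnaLevel a dr` antitone on all of `ℝ`. -/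
noncomputable def mrnaLevel (a dr : ℝ → ℝ) (x : ℝ) : ℝ :=
  invFunOn dr (Ici 0) (a (max x 0))

noncomputable def proteinLevel (a dr dp k : ℝ → ℝ) (x : ℝ) : ℝ :=
  invFunOn dp (Ici 0) (k (mrnaLevel a dr x))

namespace GeneHypotheses

variable {a dr dp k : ℝ → ℝ} {rbar : ℝ}

theorem a_pos (h : GeneHypotheses a dr dp k rbar) {x : ℝ} (hx : 0 ≤ x) : 0 < a x :=
  (h.a_nonneg (x + 1) (by linarith)).trans_lt
    (h.a_strictAntiOn (mem_Ici.2 hx) (mem_Ici.2 (by linarith)) (by linarith))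

theorem a_max_mem_Ioc (h : GeneHypotheses a dr dp k rbar) (x : ℝ) :
    a (max x 0) ∈ Ioc 0 (dr rbar) :=
  ⟨h.a_pos (le_max_right x 0), h.dr_rbar ▸
    h.a_strictAntiOn.antitoneOn self_mem_Ici (mem_Ici.2 (le_max_right x 0)) (le_max_right x 0)⟩

theorem a_max_mem_image (h : GeneHypotheses a dr dp k rbar) (x : ℝ) :
    a (max x 0) ∈ dr '' Ici 0 :=
  h.isRateFunction_dr.mem_image_of_mem_Icc h.rbar_nonneg (Ioc_subset_Icc_self (h.a_max_mem_Ioc x))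

theorem dr_mrnaLevel (h : GeneHypotheses a dr dp k rbar) (x : ℝ) :
    dr (mrnaLevel a dr x) = a (max x 0) :=
  invFunOn_eq (h.a_max_mem_image x)

theorem mrnaLevel_mem_Ioc (h : GeneHypotheses a dr dp k rbar) (x : ℝ) :
    mrnaLevel a dr x ∈ Ioc 0 rbar :=
  ⟨h.isRateFunction_dr.invFunOn_pos (h.a_max_mem_image x) (h.a_max_mem_Ioc x).1,
    h.isRateFunction_dr.invFunOn_le h.rbar_nonneg (h.a_max_mem_image x) (h.a_max_mem_Ioc x).2⟩

theorem antitone_mrnaLevel (h : GeneHypotheses a dr dp k rbar) : Antitone (mrnaLevel a dr) :=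
  fun x y hxy ↦ h.isRateFunction_dr.strictMonoOn.strictMonoOn_invFunOn.monotoneOn
    (h.a_max_mem_image y) (h.a_max_mem_image x)
    (h.a_strictAntiOn.antitoneOn (mem_Ici.2 (le_max_right x 0)) (mem_Ici.2 (le_max_right y 0))
      (max_le_max_right 0 hxy))

theorem k_mrnaLevel_mem_Ioc (h : GeneHypotheses a dr dp k rbar) (x : ℝ) :
    k (mrnaLevel a dr x) ∈ Ioc 0 (k rbar) := by
  obtain ⟨hr0, hr⟩ := h.mrnaLevel_mem_Ioc x
  have hk := h.k_strictMonoOn.monotoneOn (mem_Ici.2 hr0.le) (mem_Ici.2 h.rbar_nonneg) hr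
  exact ⟨h.k_zero ▸ h.k_strictMonoOn self_mem_Ici (mem_Ici.2 hr0.le) hr0, hk⟩

theorem k_mrnaLevel_mem_image (h : GeneHypotheses a dr dp k rbar) (x : ℝ) :
    k (mrnaLevel a dr x) ∈ dp '' Ici 0 := by
  obtain ⟨Y, hY0, hY⟩ := h.exists_k_rbar_lt_dp
  exact h.isRateFunction_dp.mem_image_of_mem_Icc hY0
    ⟨(h.k_mrnaLevel_mem_Ioc x).1.le, (h.k_mrnaLevel_mem_Ioc x).2.trans hY.le⟩

theorem dp_proteinLevel (h : GeneHypotheses a dr dp k rbar) (x : ℝ) :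
    dp (proteinLevel a dr dp k x) = k (mrnaLevel a dr x) :=
  invFunOn_eq (h.k_mrnaLevel_mem_image x)

theorem proteinLevel_pos (h : GeneHypotheses a dr dp k rbar) (x : ℝ) :
    0 < proteinLevel a dr dp k x :=
  h.isRateFunction_dp.invFunOn_pos (h.k_mrnaLevel_mem_image x) (h.k_mrnaLevel_mem_Ioc x).1

theorem bddAbove_range_proteinLevel (h : GeneHypotheses a dr dp k rbar) :
    BddAbove (range (proteinLevel a dr dp k)) := by
  obtain ⟨Y, hY0, hY⟩ := h.exists_k_rbar_lt_dp
  refine ⟨Y, forall_mem_range.2 fun x ↦ ?_⟩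
  exact h.isRateFunction_dp.invFunOn_le hY0 (h.k_mrnaLevel_mem_image x)
    ((h.k_mrnaLevel_mem_Ioc x).2.trans hY.le)

theorem antitone_proteinLevel (h : GeneHypotheses a dr dp k rbar) :
    Antitone (proteinLevel a dr dp k) := fun x y hxy ↦ by
  have hr := h.antitone_mrnaLevel hxy
  have hk := h.k_strictMonoOn.monotoneOn (mem_Ici.2 (h.mrnaLevel_mem_Ioc y).1.le)
    (mem_Ici.2 (h.mrnaLevel_mem_Ioc x).1.le) hr
  exact h.isRateFunction_dp.strictMonoOn.strictMonoOn_invFunOn.monotoneOn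
    (h.k_mrnaLevel_mem_image y) (h.k_mrnaLevel_mem_image x) hk

end GeneHypotheses

theorem even_exists_steady_state_general (n : ℕ) [NeZero n] (hn : Even n)
    (a dr dp k : Fin n → ℝ → ℝ)
    (hA2 : ∀ i, ∀ x ≥ (0 : ℝ), 0 ≤ a i x)
    (hA3 : ∀ i, StrictAntiOn (a i) (Set.Ici 0))
    (hD1 : ∀ i, ContDiffOn ℝ 1 (dr i) (Set.Ici 0) ∧ ContDiffOn ℝ 1 (dp i) (Set.Ici 0) ∧
      ContDiffOn ℝ 1 (k i) (Set.Ici 0))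
    (hD2 : ∀ i, dr i 0 = 0 ∧ dp i 0 = 0 ∧ k i 0 = 0)
    (hD3 : ∀ i, StrictMonoOn (dr i) (Set.Ici 0) ∧ StrictMonoOn (dp i) (Set.Ici 0) ∧
      StrictMonoOn (k i) (Set.Ici 0))
    -- `rbar i` is the unique point in `(0,∞)` with `dr i (rbar i) = a i 0`
    (rbar : Fin n → ℝ) (hrbar_pos : ∀ i, 0 < rbar i)
    (hrbar : ∀ i, dr i (rbar i) = a i 0)
    -- (A6)
    (hA6 : ∀ i, (∃ x ≥ (0 : ℝ), dr i x > a i 0) ∧ (∃ x ≥ (0 : ℝ), dp i x > k i (rbar i))) :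
    ∃ r p : Fin n → ℝ, IsSteadyState n a dr dp k r p := by
  have h : ∀ i, GeneHypotheses (a i) (dr i) (dp i) (k i) (rbar i) := fun i ↦
    { a_nonneg := hA2 i
      a_strictAntiOn := hA3 i
      isRateFunction_dr := ⟨(hD1 i).1.continuousOn, (hD3 i).1, (hD2 i).1⟩
      isRateFunction_dp := ⟨(hD1 i).2.1.continuousOn, (hD3 i).2.1, (hD2 i).2.1⟩
      k_strictMonoOn := (hD3 i).2.2
      k_zero := (hD2 i).2.2
      rbar_nonneg := (hrbar_pos i).le
      dr_rbar := hrbar i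
      exists_k_rbar_lt_dp := (hA6 i).2 }
  choose Y hY using fun i ↦ (h i).bddAbove_range_proteinLevel
  obtain ⟨B, hB⟩ := Finite.bddAbove_range Y
  obtain ⟨p, hp⟩ := exists_eq_apply_sub_one_of_antitone hn (fun i ↦ (h i).antitone_proteinLevel)
    fun i x ↦ ⟨((h i).proteinLevel_pos x).le,
      (hY i (mem_range_self x)).trans (hB (mem_range_self i))⟩
  have hp_pos : ∀ i, 0 < p i := fun i ↦ hp i ▸ (h i).proteinLevel_pos _
  refine ⟨fun i ↦ mrnaLevel (a i) (dr i) (p (i - 1)), p, fun i ↦ ((h i).mrnaLevel_mem_Ioc _).1,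
    hp_pos, fun i ↦ ?_, fun i ↦ ?_⟩
  · rw [(h i).dr_mrnaLevel, max_eq_left (hp_pos (i - 1)).le]
  · rw [hp i, (h i).dp_proteinLevel]

/-- For `n` even, under the standing assumptions (A1)–(A4) and (D1)–(D3), together
with (A5) (zero leakiness), (A6), and (D4) (nonvanishing derivatives of the
degradation-rate functions at 0), the generalized `n`-gene repressilator has at
least one steady state in `(0,∞)^{2n}` (the central steady state `E_C` exists). -/
theorem even_exists_steady_state (n : ℕ) [NeZero n] (hn : Even n)
    (a dr dp k : Fin n → ℝ → ℝ)
    (hA1 : ∀ i, ContDiffOn ℝ 1 (a i) (Set.Ici 0))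
    (hA2 : ∀ i, ∀ x ≥ (0 : ℝ), 0 ≤ a i x)
    (hA3 : ∀ i, StrictAntiOn (a i) (Set.Ici 0))
    (hA4 : ∀ i, 0 < a i 0)
    (hD1 : ∀ i, ContDiffOn ℝ 1 (dr i) (Set.Ici 0) ∧ ContDiffOn ℝ 1 (dp i) (Set.Ici 0) ∧
      ContDiffOn ℝ 1 (k i) (Set.Ici 0))
    (hD2 : ∀ i, dr i 0 = 0 ∧ dp i 0 = 0 ∧ k i 0 = 0)
    (hD3 : ∀ i, StrictMonoOn (dr i) (Set.Ici 0) ∧ StrictMonoOn (dp i) (Set.Ici 0) ∧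
      StrictMonoOn (k i) (Set.Ici 0))
    -- (A5): zero leakiness
    (hA5 : ∀ i, Filter.Tendsto (a i) Filter.atTop (nhds 0))
    -- `rbar i` is the unique point in `(0,∞)` with `dr i (rbar i) = a i 0`
    (rbar : Fin n → ℝ) (hrbar_pos : ∀ i, 0 < rbar i)
    (hrbar : ∀ i, dr i (rbar i) = a i 0)
    -- (A6)
    (hA6 : ∀ i, (∃ x ≥ (0 : ℝ), dr i x > a i 0) ∧ (∃ x ≥ (0 : ℝ), dp i x > k i (rbar i)))
    -- (D4)
    (hD4 : ∀ i, derivWithin (dr i) (Set.Ici 0) 0 ≠ 0 ∧ derivWithin (dp i) (Set.Ici 0) 0 ≠ 0) :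
    ∃ r p : Fin n → ℝ, IsSteadyState n a dr dp k r p :=
  even_exists_steady_state_general n hn a dr dp k hA2 hA3 hD1 hD2 hD3 rbar hrbar_pos hrbar hA6
end

section
/- Suppose n is even, assumption (A6) holds, and the leakiness α_i := lim_{x→∞} a_i(x) is strictly positive for every i = 1,…,n. Then the generalized n-gene repressilator has at least one steady state in (0,∞)^{2n} (the central steady state E_C exists). -/
/-!
Each gene `i` turns the protein level `x` of its repressor into its own protein level
`gᵢ(x) = d_{p_i}⁻¹ (kᵢ (d_{r_i}⁻¹ (aᵢ x)))`. Leakiness keeps `aᵢ x` in `(0, aᵢ 0]`, so by the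
intermediate value theorem these inverses exist, and (A6) bounds `gᵢ` by some `Yᵢ`. Each `gᵢ`
is antitone, so for `n` even the composite around the cycle is monotone on `[0, maxᵢ Yᵢ]`,
which it maps into itself; by Knaster–Tarski it has a fixed point `p_{n-1}`, and
`pᵢ = gᵢ(p_{i-1})` then closes up into a steady state.
-/

open Set Filter Topology

theorem MonotoneOn.exists_fixedPoint_of_mapsTo_Icc {α : Type*} [ConditionallyCompleteLattice α]
    {f : α → α} {a b : α} (hab : a ≤ b) (hf : MonotoneOn f (Icc a b))
    (hmaps : MapsTo f (Icc a b) (Icc a b)) : ∃ x ∈ Icc a b, f x = x := by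
  have : Fact (a ≤ b) := ⟨hab⟩
  let F : Icc a b →o Icc a b := ⟨hmaps.restrict f _ _, fun x y hxy => hf x.2 y.2 hxy⟩
  exact ⟨F.lfp, F.lfp.2, congrArg Subtype.val F.isFixedPt_lfp⟩

theorem AntitoneOn.le_of_tendsto_atTop {α β : Type*} [LinearOrder α] [TopologicalSpace α]
    [OrderClosedTopology α] [Preorder β] [IsDirectedOrder β] {f : β → α} {c : β} {l : α}
    (hf : AntitoneOn f (Ici c)) (hl : Tendsto f atTop (𝓝 l)) {x : β} (hx : c ≤ x) :
    l ≤ f x :=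
  have : Nonempty β := ⟨c⟩
  le_of_tendsto hl <| (eventually_ge_atTop x).mono fun _ hxy => hf hx (hx.trans hxy) hxy

def composeUpTo {α : Type*} (g : ℕ → α → α) : ℕ → α → α
  | 0 => id
  | j + 1 => g j ∘ composeUpTo g j

section composeUpTo

variable {α : Type*} {g : ℕ → α → α} {s : Set α}

theorem composeUpTo_mapsTo (hmaps : ∀ j, MapsTo (g j) s s) (j : ℕ) :
    MapsTo (composeUpTo g j) s s := by
  induction j with
  | zero => exact mapsTo_id s
  | succ j ih => exact (hmaps j).comp ih

theorem monotoneOn_composeUpTo_of_even [Preorder α] (hmaps : ∀ j, MapsTo (g j) s s)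
    (hanti : ∀ j, AntitoneOn (g j) s) {n : ℕ} (hn : Even n) :
    MonotoneOn (composeUpTo g n) s := by
  obtain ⟨j, rfl⟩ := hn
  rw [← two_mul]
  induction j with
  | zero => exact monotoneOn_id
  | succ j ih =>
    exact ((hanti (2 * j + 1)).comp (hanti (2 * j)) (hmaps _)).comp ih
      (composeUpTo_mapsTo hmaps _)

theorem composeUpTo_val_sub_one_add_one {n : ℕ} [NeZero n] {q : α}
    (hq : composeUpTo g n q = q) (i : Fin n) :
    composeUpTo g ((i - 1 : Fin n).val + 1) q = composeUpTo g i q := by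
  obtain ⟨m, rfl⟩ := Nat.exists_eq_succ_of_ne_zero (NeZero.ne n)
  rw [Fin.coe_sub_one]
  split_ifs with hi
  · subst hi
    exact hq
  · rw [Nat.sub_add_cancel (Nat.one_le_iff_ne_zero.2 (Fin.val_ne_zero_iff.2 hi))]

end composeUpTo

namespace Repressilator

variable {a dr dp k : ℝ → ℝ} {α rbar Y : ℝ}

theorem exists_response (ha : AntitoneOn a (Ici 0)) (hα : Tendsto a atTop (𝓝 α))
    (hαpos : 0 < α) (hdr : ContinuousOn dr (Ici 0)) (hdr0 : dr 0 = 0) (hrbar : 0 ≤ rbar)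
    (hdr_rbar : dr rbar = a 0) (hdp : ContinuousOn dp (Ici 0)) (hdp0 : dp 0 = 0) (hY : 0 ≤ Y)
    (hdpY : k rbar < dp Y) (hk : StrictMonoOn k (Ici 0)) (hk0 : k 0 = 0) {x : ℝ}
    (hx : 0 ≤ x) : ∃ r ∈ Ioc 0 rbar, ∃ p ∈ Ioc 0 Y, dr r = a x ∧ dp p = k r := by
  have hax : a x ∈ Ioc (dr 0) (dr rbar) := by
    rw [hdr0, hdr_rbar]
    exact ⟨hαpos.trans_le (ha.le_of_tendsto_atTop hα hx), ha self_mem_Ici hx hx⟩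
  obtain ⟨r, hr, hrx⟩ := intermediate_value_Ioc hrbar (hdr.mono Icc_subset_Ici_self) hax
  have hkr : k r ∈ Ioc (dp 0) (dp Y) := by
    rw [hdp0, ← hk0]
    exact ⟨hk self_mem_Ici hr.1.le hr.1,
      (hk.monotoneOn hr.1.le hrbar hr.2).trans hdpY.le⟩
  obtain ⟨p, hp, hpr⟩ := intermediate_value_Ioc hY (hdp.mono Icc_subset_Ici_self) hkr
  exact ⟨r, hr, p, hp, hrx, hpr⟩

theorem response_anti (ha : AntitoneOn a (Ici 0)) (hdr : StrictMonoOn dr (Ici 0))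
    (hdp : StrictMonoOn dp (Ici 0)) (hk : MonotoneOn k (Ici 0))
    {x x' r r' p p' : ℝ} (hx : 0 ≤ x) (hxx' : x ≤ x') (hr : 0 ≤ r) (hr' : 0 ≤ r')
    (hp : 0 ≤ p) (hp' : 0 ≤ p') (hrx : dr r = a x) (hrx' : dr r' = a x')
    (hpr : dp p = k r) (hpr' : dp p' = k r') : p' ≤ p := by
  have hrr' : r' ≤ r := (hdr.le_iff_le hr' hr).1 <| by
    rw [hrx, hrx']
    exact ha hx (hx.trans hxx') hxx'
  exact (hdp.le_iff_le hp' hp).1 <| by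
    rw [hpr, hpr']
    exact hk hr' hr hrr'

end Repressilator

theorem Repressilator.isSteadyState_of_composeUpTo_eq {n : ℕ} [NeZero n]
    {a dr dp k R P : Fin n → ℝ → ℝ} (hR : ∀ i x, 0 ≤ x → 0 < R i x)
    (hP : ∀ i x, 0 ≤ x → 0 < P i x) (hRx : ∀ i x, 0 ≤ x → dr i (R i x) = a i x)
    (hPR : ∀ i x, 0 ≤ x → dp i (P i x) = k i (R i x))
    {q : ℝ} (hq : 0 ≤ q) (hfix : composeUpTo (fun j => P (Fin.ofNat n j)) n q = q) :
    IsSteadyState n a dr dp k (fun i => R i (composeUpTo (fun j => P (Fin.ofNat n j)) i q))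
      (fun i => composeUpTo (fun j => P (Fin.ofNat n j)) (i + 1) q) := by
  set x := fun j => composeUpTo (fun j => P (Fin.ofNat n j)) j q
  have hx : ∀ j, 0 ≤ x j := fun j =>
    composeUpTo_mapsTo (s := Ici 0) (fun j y hy => (hP (Fin.ofNat n j) y hy).le) j hq
  have hx_succ : ∀ i : Fin n, x (i + 1) = P i (x i) := fun i => by
    simp only [x, composeUpTo, Function.comp_apply, Fin.ofNat_val_eq_self]
  refine ⟨fun i => hR i _ (hx i), fun i => ?_, fun i => ?_, fun i => ?_⟩
  · show 0 < x (i + 1)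
    exact (hx_succ i).symm ▸ hP i _ (hx i)
  · show dr i (R i (x i)) = a i (x ((i - 1 : Fin n) + 1))
    rw [hRx i _ (hx i)]
    exact congrArg (a i) (composeUpTo_val_sub_one_add_one hfix i).symm
  · show dp i (x (i + 1)) = k i (R i (x i))
    rw [hx_succ i]
    exact hPR i _ (hx i)

theorem even_exists_steady_state_of_leaky_general (n : ℕ) [NeZero n] (hn : Even n)
    (a dr dp k : Fin n → ℝ → ℝ)
    (hA3 : ∀ i, StrictAntiOn (a i) (Set.Ici 0))
    (hD1 : ∀ i, ContDiffOn ℝ 1 (dr i) (Set.Ici 0) ∧ ContDiffOn ℝ 1 (dp i) (Set.Ici 0) ∧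
      ContDiffOn ℝ 1 (k i) (Set.Ici 0))
    (hD2 : ∀ i, dr i 0 = 0 ∧ dp i 0 = 0 ∧ k i 0 = 0)
    (hD3 : ∀ i, StrictMonoOn (dr i) (Set.Ici 0) ∧ StrictMonoOn (dp i) (Set.Ici 0) ∧
      StrictMonoOn (k i) (Set.Ici 0))
    -- the leakiness `α i := lim_{x→∞} a i x` is strictly positive
    (α : Fin n → ℝ) (hα : ∀ i, Filter.Tendsto (a i) Filter.atTop (nhds (α i)))
    (hαpos : ∀ i, 0 < α i)
    -- `rbar i` is the unique point in `(0,∞)` with `dr i (rbar i) = a i 0`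
    (rbar : Fin n → ℝ) (hrbar_pos : ∀ i, 0 < rbar i)
    (hrbar : ∀ i, dr i (rbar i) = a i 0)
    -- (A6)
    (hA6 : ∀ i, (∃ x ≥ (0 : ℝ), dr i x > a i 0) ∧ (∃ x ≥ (0 : ℝ), dp i x > k i (rbar i))) :
    ∃ r p : Fin n → ℝ, IsSteadyState n a dr dp k r p := by
  choose Y hY0 hYgt using fun i => (hA6 i).2
  choose! R hR P hP hRx hPR using fun i x (hx : 0 ≤ x) =>
    Repressilator.exists_response (hA3 i).antitoneOn (hα i) (hαpos i)
      (hD1 i).1.continuousOn (hD2 i).1 (hrbar_pos i).le (hrbar i) (hD1 i).2.1.continuousOn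
      (hD2 i).2.1 (hY0 i) (hYgt i) (hD3 i).2.2 (hD2 i).2.2 hx
  obtain ⟨M, hM⟩ := Finite.exists_le Y
  set g : ℕ → ℝ → ℝ := fun j => P (Fin.ofNat n j)
  have hmaps : ∀ j, MapsTo (g j) (Icc 0 M) (Icc 0 M) := fun j x hx =>
    ⟨(hP _ x hx.1).1.le, (hP _ x hx.1).2.trans (hM _)⟩
  have hanti : ∀ j, AntitoneOn (g j) (Icc 0 M) := fun j x hx y hy hxy =>
    Repressilator.response_anti (hA3 _).antitoneOn (hD3 _).1 (hD3 _).2.1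
      (hD3 _).2.2.monotoneOn hx.1 hxy (hR _ x hx.1).1.le (hR _ y hy.1).1.le
      (hP _ x hx.1).1.le (hP _ y hy.1).1.le
      (hRx _ x hx.1) (hRx _ y hy.1) (hPR _ x hx.1) (hPR _ y hy.1)
  obtain ⟨q, hq, hfix⟩ :=
    (monotoneOn_composeUpTo_of_even hmaps hanti hn).exists_fixedPoint_of_mapsTo_Icc
      ((hY0 0).trans (hM 0)) (composeUpTo_mapsTo hmaps n)
  exact ⟨_, _, Repressilator.isSteadyState_of_composeUpTo_eq (fun i x hx => (hR i x hx).1)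
    (fun i x hx => (hP i x hx).1) hRx hPR hq.1 hfix⟩

/-- For `n` even, under the standing assumptions (A1)–(A4) and (D1)–(D3), together
with (A6) and strictly positive leakiness `α i = lim_{x→∞} a i x > 0` for all `i`,
the generalized `n`-gene repressilator has at least one steady state in
`(0,∞)^{2n}` (the central steady state `E_C` exists). -/
theorem even_exists_steady_state_of_leaky (n : ℕ) [NeZero n] (hn : Even n)
    (a dr dp k : Fin n → ℝ → ℝ)
    (hA1 : ∀ i, ContDiffOn ℝ 1 (a i) (Set.Ici 0))
    (hA2 : ∀ i, ∀ x ≥ (0 : ℝ), 0 ≤ a i x)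
    (hA3 : ∀ i, StrictAntiOn (a i) (Set.Ici 0))
    (hA4 : ∀ i, 0 < a i 0)
    (hD1 : ∀ i, ContDiffOn ℝ 1 (dr i) (Set.Ici 0) ∧ ContDiffOn ℝ 1 (dp i) (Set.Ici 0) ∧
      ContDiffOn ℝ 1 (k i) (Set.Ici 0))
    (hD2 : ∀ i, dr i 0 = 0 ∧ dp i 0 = 0 ∧ k i 0 = 0)
    (hD3 : ∀ i, StrictMonoOn (dr i) (Set.Ici 0) ∧ StrictMonoOn (dp i) (Set.Ici 0) ∧
      StrictMonoOn (k i) (Set.Ici 0))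
    -- the leakiness `α i := lim_{x→∞} a i x` is strictly positive
    (α : Fin n → ℝ) (hα : ∀ i, Filter.Tendsto (a i) Filter.atTop (nhds (α i)))
    (hαpos : ∀ i, 0 < α i)
    -- `rbar i` is the unique point in `(0,∞)` with `dr i (rbar i) = a i 0`
    (rbar : Fin n → ℝ) (hrbar_pos : ∀ i, 0 < rbar i)
    (hrbar : ∀ i, dr i (rbar i) = a i 0)
    -- (A6)
    (hA6 : ∀ i, (∃ x ≥ (0 : ℝ), dr i x > a i 0) ∧ (∃ x ≥ (0 : ℝ), dp i x > k i (rbar i))) :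
    ∃ r p : Fin n → ℝ, IsSteadyState n a dr dp k r p :=
  even_exists_steady_state_of_leaky_general n hn a dr dp k hA3 hD1 hD2 hD3 α hα hαpos rbar hrbar_pos
    hrbar hA6
end

section
/- Let n ≥ 1 and let ρ_1,…,ρ_n, π_1,…,π_n, κ_1,…,κ_n, σ_1,…,σ_n be real numbers. Let J be the 2n × 2n real matrix, with rows and columns indexed by the symbols r_1,…,r_n, p_1,…,p_n, whose only nonzero entries are: J_{r_i, r_i} = −ρ_i, J_{r_i, p_{i−1}} = σ_i (indices modulo n, so p_0 := p_n), J_{p_i, r_i} = κ_i, and J_{p_i, p_i} = −π_i, for i = 1,…,n. Then the characteristic polynomial of J is det(λI − J) = ∏_{j=1}^{n} (λ + ρ_j)(λ + π_j) − ∏_{j=1}^{n} κ_j σ_j. -/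
/-!
Off the diagonal, `J` is supported on the graph of the `2n`-cycle
`c : r_1 ↦ p_1 ↦ r_2 ↦ ⋯ ↦ p_n ↦ r_1`. In the permutation expansion of `det(λI − J)` a term
survives only if the permutation sends each index to itself or to its image under `c`, and such a
permutation is either the identity or `c`. The identity contributes `∏ (λ + ρ_j)(λ + π_j)`; `c`
contributes `sign c · ∏ (−κ_j)(−σ_j) = −∏ κ_j σ_j`, as `c` is a cycle of even length `2n`.
-/

open Polynomial

/-- The Jacobian matrix of the generalized `n`-gene repressilator at a steady
state, with rows and columns indexed by `r_1,…,r_n` (the `Sum.inl` indices) and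
`p_1,…,p_n` (the `Sum.inr` indices): the only nonzero entries are
`J_{r_i, r_i} = -ρ i`, `J_{r_i, p_{i-1}} = σ i` (indices mod `n`),
`J_{p_i, r_i} = κ i`, and `J_{p_i, p_i} = -π i`. -/
def repressilatorJacobian (n : ℕ) [NeZero n] (ρ π κ σ : Fin n → ℝ) :
    Matrix (Fin n ⊕ Fin n) (Fin n ⊕ Fin n) ℝ :=
  Matrix.of fun i j =>
    match i, j with
    | .inl i, .inl j => if j = i then -ρ i else 0
    | .inl i, .inr j => if j = i - 1 then σ i else 0
    | .inr i, .inl j => if j = i then κ i else 0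
    | .inr i, .inr j => if j = i then -π i else 0


open Equiv Finset

namespace Equiv.Perm

variable {ι : Type*}

theorem eq_one_or_eq_of_forall_apply_eq_or_eq [Fintype ι] [DecidableEq ι] {c g : Perm ι}
    (hc : c.IsCycle) (hsupp : c.support = univ) (hg : ∀ x, g x = x ∨ g x = c x) :
    g = 1 ∨ g = c := by
  have hmoves : ∀ x, c x ≠ x := fun x => mem_support.mp (hsupp ▸ mem_univ x)
  by_cases hfix : ∀ x, g x = x
  · exact .inl (Equiv.ext hfix)
  push Not at hfix
  obtain ⟨x, hx⟩ := hfix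
  -- `g (c y) = c y` would collide with `g y = c y`
  have hstep : ∀ y, g y = c y → g (c y) = c (c y) := fun y hy =>
    (hg (c y)).resolve_left fun h => hmoves y (g.injective (h.trans hy.symm))
  refine .inr (Equiv.ext fun y => ?_)
  obtain ⟨k, rfl⟩ := hc.exists_pow_eq (hmoves x) (hmoves y)
  induction k with
  | zero => exact (hg x).resolve_left hx
  | succ k ih => rw [pow_succ', mul_apply]; exact hstep _ ih

end Equiv.Perm

namespace Matrix

variable {ι R : Type*} [Fintype ι] [DecidableEq ι] [CommRing R]

theorem det_eq_prod_diag_add_sign_smul_of_isCycle {M : Matrix ι ι R} {c : Perm ι}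
    (hc : c.IsCycle) (hsupp : c.support = univ) (hM : ∀ i j, j ≠ i → j ≠ c i → M j i = 0) :
    M.det = ∏ i, M i i + Perm.sign c • ∏ i, M (c i) i := by
  have hvanish : ∀ g ∉ ({1, c} : Finset (Perm ι)), Perm.sign g • ∏ i, M (g i) i = 0 := by
    intro g hg
    simp only [mem_insert, mem_singleton, not_or] at hg
    obtain ⟨i, hi⟩ : ∃ i, ¬(g i = i ∨ g i = c i) := by
      by_contra! h
      exact (Perm.eq_one_or_eq_of_forall_apply_eq_or_eq hc hsupp h).elim hg.1 hg.2
    push Not at hi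
    rw [prod_eq_zero (f := fun i => M (g i) i) (mem_univ i) (hM i (g i) hi.1 hi.2), smul_zero]
  rw [det_apply, ← sum_subset (subset_univ _) fun g _ hg => hvanish g hg,
    sum_pair hc.ne_one.symm]
  simp

theorem charpoly_eq_prod_sub_prod_of_isCycle {M : Matrix ι ι R} {c : Perm ι} (hc : c.IsCycle)
    (hsupp : c.support = univ) (hM : ∀ i j, j ≠ i → j ≠ c i → M j i = 0) :
    M.charpoly = ∏ i, (X - C (M i i)) - C (∏ i, M (c i) i) := by
  have hmoves : ∀ i, c i ≠ i := fun i => Perm.mem_support.mp (hsupp ▸ mem_univ i)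
  have hchar : ∀ i j, j ≠ i → j ≠ c i → M.charmatrix j i = 0 := fun i j hji hjc => by
    rw [charmatrix_apply_ne _ _ _ hji, hM i j hji hjc, C_0, neg_zero]
  -- `sign c = -(-1) ^ card ι` cancels the sign `(-1) ^ card ι` of `∏ i, -C (M (c i) i)`
  rw [charpoly, det_eq_prod_diag_add_sign_smul_of_isCycle hc hsupp hchar, hc.sign, hsupp,
    card_univ]
  simp only [charmatrix_apply_eq, charmatrix_apply_ne _ _ _ (hmoves _), prod_neg, map_prod]
  simp [Units.smul_def, ← mul_assoc, ← pow_add, sub_eq_add_neg]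

end Matrix

section Repressilator

variable (n : ℕ) [NeZero n]

def repressilatorCycle : Perm (Fin n ⊕ Fin n) :=
  (sumCongr (Equiv.refl (Fin n)) (Equiv.addRight 1)).trans (sumComm (Fin n) (Fin n))

variable {n}

@[simp]
theorem repressilatorCycle_inl (j : Fin n) : repressilatorCycle n (.inl j) = .inr j := rfl

@[simp]
theorem repressilatorCycle_inr (j : Fin n) : repressilatorCycle n (.inr j) = .inl (j + 1) := rfl

theorem repressilatorCycle_support : (repressilatorCycle n).support = univ := by
  ext (j | j) <;> simp

open Fin.NatCast in
theorem repressilatorCycle_isCycle : (repressilatorCycle n).IsCycle := by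
  refine ⟨.inl 0, by simp, fun y _ => ?_⟩
  have hinl : ∀ k : ℕ, (repressilatorCycle n).SameCycle (.inl 0) (.inl (k : Fin n)) := by
    intro k
    induction k with
    | zero => simpa using Perm.SameCycle.refl _ _
    | succ k ih =>
      rw [Nat.cast_succ, ← repressilatorCycle_inr, ← repressilatorCycle_inl,
        Perm.sameCycle_apply_right, Perm.sameCycle_apply_right]
      exact ih
  rcases y with j | j
  · simpa using hinl j
  · simpa [← repressilatorCycle_inl, Perm.sameCycle_apply_right] using hinl j

theorem repressilatorJacobian_eq_zero_of_ne (ρ π κ σ : Fin n → ℝ) (i j : Fin n ⊕ Fin n)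
    (hji : j ≠ i) (hjc : j ≠ repressilatorCycle n i) :
    repressilatorJacobian n ρ π κ σ j i = 0 := by
  rcases i with a | a <;> rcases j with b | b <;>
    simp_all [repressilatorJacobian, eq_sub_iff_add_eq, eq_comm]

theorem prod_X_sub_C_repressilatorJacobian_diag (ρ π κ σ : Fin n → ℝ) :
    ∏ i, (X - C (repressilatorJacobian n ρ π κ σ i i)) =
      ∏ j : Fin n, ((X + C (ρ j)) * (X + C (π j))) := by
  simp [repressilatorJacobian, Fintype.prod_sum_type, prod_mul_distrib]

theorem prod_repressilatorJacobian_cycle (ρ π κ σ : Fin n → ℝ) :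
    ∏ i, repressilatorJacobian n ρ π κ σ (repressilatorCycle n i) i = ∏ j, κ j * σ j := by
  rw [Fintype.prod_sum_type, prod_mul_distrib]
  congr 1
  · simp [repressilatorJacobian]
  · simp only [repressilatorCycle_inr, repressilatorJacobian, Matrix.of_apply, add_sub_cancel_right,
      if_true]
    exact Fintype.prod_equiv (Equiv.addRight 1) _ _ fun _ => rfl

end Repressilator

/-- The characteristic polynomial `det(λI − J)` of the repressilator Jacobian is
`∏_{j=1}^n (λ + ρ_j)(λ + π_j) − ∏_{j=1}^n κ_j σ_j`. -/
theorem repressilatorJacobian_charpoly (n : ℕ) [NeZero n] (ρ π κ σ : Fin n → ℝ) :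
    (repressilatorJacobian n ρ π κ σ).charpoly =
      (∏ j : Fin n, ((X + C (ρ j)) * (X + C (π j)))) - C (∏ j : Fin n, κ j * σ j) := by
  rw [Matrix.charpoly_eq_prod_sub_prod_of_isCycle repressilatorCycle_isCycle
      repressilatorCycle_support (repressilatorJacobian_eq_zero_of_ne ρ π κ σ),
    prod_X_sub_C_repressilatorJacobian_diag, prod_repressilatorJacobian_cycle]
end

section
/- Let n ≥ 1, let ∂_1^R,…,∂_n^R, ∂_1^P,…,∂_n^P be strictly positive real numbers, and let K > 0. Set p(λ) = ∏_{j=1}^{n} (λ + ∂_j^R)(λ + ∂_j^P) − K and D = ∏_{j=1}^{n} ∂_j^R ∂_j^P. Then every complex root of p has strictly negative real part if and only if D > K. -/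
/-!
If `Re z ≥ 0` then every factor satisfies `|z + d| ≥ d`, so `|p(z) + K| ≥ D`, and `D > K` rules out
a root there. Conversely, if `D ≤ K`, then on the real axis `p(0) = D - K ≤ 0` while `p(t) → ∞`,
so the intermediate value theorem gives a root `t ≥ 0`.
-/

open Finset

lemma Complex.le_norm_add_ofReal {z : ℂ} (hz : 0 ≤ z.re) (d : ℝ) :
    d ≤ ‖z + d‖ :=
  calc d ≤ (z + d).re := by rw [Complex.add_re, Complex.ofReal_re]; linarith
    _ ≤ ‖z + d‖ := Complex.re_le_norm _

lemma prod_le_norm_prod_add {ι : Type*} (s : Finset ι) {d : ι → ℝ} (hd : ∀ i ∈ s, 0 ≤ d i)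
    {z : ℂ} (hz : 0 ≤ z.re) : ∏ i ∈ s, d i ≤ ‖∏ i ∈ s, (z + d i)‖ := by
  rw [norm_prod]
  exact prod_le_prod hd fun i hi => Complex.le_norm_add_ofReal hz (d i)

lemma exists_nonneg_prod_add_eq {ι : Type*} [Fintype ι] [Nonempty ι] {d : ι → ℝ}
    (hd : ∀ i, 0 ≤ d i) {K : ℝ} (hK : ∏ i, d i ≤ K) : ∃ t ≥ (0 : ℝ), ∏ i, (t + d i) = K := by
  set T := max K 1
  have hT : 1 ≤ T := le_max_right _ _
  have hKT : K ≤ ∏ i, (T + d i) :=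
    calc K ≤ T := le_max_left _ _
      _ ≤ T ^ Fintype.card ι := le_self_pow₀ hT Fintype.card_ne_zero
      _ = ∏ _i : ι, T := by simp
      _ ≤ ∏ i, (T + d i) := prod_le_prod (fun _ _ => by positivity) fun i _ => by linarith [hd i]
  have hcont : ContinuousOn (fun t : ℝ => ∏ i, (t + d i)) (Set.Icc 0 T) := by fun_prop
  obtain ⟨t, ht, hKt⟩ := intermediate_value_Icc (by linarith) hcont ⟨by simpa using hK, hKT⟩
  exact ⟨t, ht.1, hKt⟩

theorem forall_re_neg_of_prod_add_eq_iff {ι : Type*} [Fintype ι] [Nonempty ι] {d : ι → ℝ}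
    (hd : ∀ i, 0 ≤ d i) {K : ℝ} (hK : 0 ≤ K) :
    (∀ z : ℂ, ∏ i, (z + d i) = K → z.re < 0) ↔ K < ∏ i, d i := by
  constructor
  · intro h
    by_contra! hDK
    obtain ⟨t, ht, hroot⟩ := exists_nonneg_prod_add_eq hd hDK
    have := h t (by exact_mod_cast hroot)
    simp only [Complex.ofReal_re] at this
    linarith
  · intro hKD z hroot
    by_contra! hz
    have := prod_le_norm_prod_add univ (fun i _ => hd i) hz
    rw [hroot, Complex.norm_real, Real.norm_of_nonneg hK] at this
    linarith

/-- Let `n ≥ 1`, let `∂_j^R, ∂_j^P > 0`, `K > 0`, and set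
`p(λ) = ∏_{j=1}^n (λ + ∂_j^R)(λ + ∂_j^P) − K` and `D = ∏_{j=1}^n ∂_j^R ∂_j^P`.
Then every complex root of `p` has strictly negative real part iff `D > K`. -/
theorem even_stability_criterion (n : ℕ) (hn : 1 ≤ n)
    (dR dP : Fin n → ℝ) (hdR : ∀ j, 0 < dR j) (hdP : ∀ j, 0 < dP j)
    (K : ℝ) (hK : 0 < K) :
    (∀ z : ℂ, (∏ j : Fin n, ((z + (dR j : ℂ)) * (z + (dP j : ℂ)))) - (K : ℂ) = 0 →
      z.re < 0) ↔ (∏ j : Fin n, dR j * dP j) > K := by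
  have : Nonempty (Fin n) := ⟨⟨0, hn⟩⟩
  have hd : ∀ x, 0 ≤ Sum.elim dR dP x := by
    rintro (j | j)
    exacts [(hdR j).le, (hdP j).le]
  have key := forall_re_neg_of_prod_add_eq_iff hd hK.le
  simp only [Fintype.prod_sum_type, Sum.elim_inl, Sum.elim_inr, ← prod_mul_distrib] at key
  simpa only [sub_eq_zero, gt_iff_lt] using key
end

section
/- Let n be odd, let ∂_1^R,…,∂_n^R, ∂_1^P,…,∂_n^P be strictly positive real numbers, and let K < 0 with D > |K|, where D = ∏_{j=1}^{n} ∂_j^R ∂_j^P. Then every complex root of p(λ) = ∏_{j=1}^{n} (λ + ∂_j^R)(λ + ∂_j^P) − K has strictly negative real part; hence the central steady state E_C of the generalized n-gene repressilator is locally asymptotically stable. -/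
/-! On the closed right half-plane `‖z + a‖ ≥ re (z + a) ≥ a` for every real `a`, so there, since all `∂ > 0`,
`‖∏ (z + ∂ᴿ)(z + ∂ᴾ)‖ ≥ D`. A root satisfies `‖∏ (z + ∂ᴿ)(z + ∂ᴾ)‖ = |K| < D` instead. -/

open Finset

namespace Complex

lemma le_norm_add_ofReal_s8 {z : ℂ} (hz : 0 ≤ z.re) (a : ℝ) : a ≤ ‖z + a‖ :=
  calc a ≤ (z + a).re := by simp only [add_re, ofReal_re]; linarith
    _ ≤ ‖z + a‖ := re_le_norm _

lemma prod_le_norm_prod_add_ofReal {ι : Type*} (s : Finset ι) {z : ℂ} (hz : 0 ≤ z.re)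
    {a : ι → ℝ} (ha : ∀ i ∈ s, 0 ≤ a i) : ∏ i ∈ s, a i ≤ ‖∏ i ∈ s, (z + a i)‖ := by
  rw [norm_prod]
  exact prod_le_prod ha fun i hi => le_norm_add_ofReal_s8 hz (a i)

end Complex

theorem odd_stability_sufficient_general (n : ℕ)
    (dR dP : Fin n → ℝ) (hdR : ∀ j, 0 < dR j) (hdP : ∀ j, 0 < dP j)
    (K : ℝ) (hDK : (∏ j : Fin n, dR j * dP j) > |K|) :
    ∀ z : ℂ, (∏ j : Fin n, ((z + (dR j : ℂ)) * (z + (dP j : ℂ)))) - (K : ℂ) = 0 →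
      z.re < 0 := by
  intro z hz
  by_contra! hre
  have hroot : ∏ j : Fin n, ((z + (dR j : ℂ)) * (z + (dP j : ℂ))) = K := sub_eq_zero.mp hz
  have hD : ∏ j : Fin n, dR j * dP j ≤ |K| :=
    calc ∏ j : Fin n, dR j * dP j = (∏ j, dR j) * ∏ j, dP j := prod_mul_distrib
      _ ≤ ‖∏ j, (z + (dR j : ℂ))‖ * ‖∏ j, (z + (dP j : ℂ))‖ :=
        mul_le_mul (Complex.prod_le_norm_prod_add_ofReal _ hre fun j _ => (hdR j).le)
          (Complex.prod_le_norm_prod_add_ofReal _ hre fun j _ => (hdP j).le)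
          (prod_nonneg fun j _ => (hdP j).le) (norm_nonneg _)
      _ = |K| := by rw [← norm_mul, ← prod_mul_distrib, hroot, Complex.norm_real, Real.norm_eq_abs]
  exact hD.not_gt hDK

/-- Let `n` be odd, `∂_j^R, ∂_j^P > 0`, and `K < 0` with `D > |K|`, where
`D = ∏_{j=1}^n ∂_j^R ∂_j^P`. Then every complex root of
`p(λ) = ∏_{j=1}^n (λ + ∂_j^R)(λ + ∂_j^P) − K` has strictly negative real part
(hence the central steady state `E_C` is locally asymptotically stable). -/
theorem odd_stability_sufficient (n : ℕ) (hn : Odd n)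
    (dR dP : Fin n → ℝ) (hdR : ∀ j, 0 < dR j) (hdP : ∀ j, 0 < dP j)
    (K : ℝ) (hK : K < 0) (hDK : (∏ j : Fin n, dR j * dP j) > |K|) :
    ∀ z : ℂ, (∏ j : Fin n, ((z + (dR j : ℂ)) * (z + (dP j : ℂ)))) - (K : ℂ) = 0 →
      z.re < 0 :=
  odd_stability_sufficient_general n dR dP hdR hdP K hDK
end

section
/- Define f(β, K) = (4 + 2K)(1 + β)² − 3βK² and g(β, K) = β²(8β¹⁰K³ + 64β¹⁰ + 144β⁹K³ + 576β⁹ + 792β⁸K³ + 2304β⁸ − 27β⁷K⁶ + 2184β⁷K³ + 5376β⁷ − 81β⁶K⁶ + 3528β⁶K³ + 8064β⁶ − 81β⁵K⁶ + 3528β⁵K³ + 8064β⁵ − 27β⁴K⁶ + 2184β⁴K³ + 5376β⁴ + 792β³K³ + 2304β³ + 144β²K³ + 576β² + 8βK³ + 64β). Then for every β > 0 and every K ∈ ℝ, f(β, K) > 0 if and only if g(β, K) > 0. -/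
/-- Equivalence of the `n = 3` stability conditions: with
`f(β,K) = (4+2K)(1+β)² − 3βK²` (Müller et al.'s criterion) and `g(β,K)` the fifth
Hurwitz determinant `D_5` of the characteristic polynomial of the Jacobian at the
central steady state, for every `β > 0` and every `K ∈ ℝ`,
`f(β,K) > 0` iff `g(β,K) > 0`. -/
theorem muller_vs_hurwitz_n3 (β K : ℝ) (hβ : 0 < β) :
    0 < (4 + 2 * K) * (1 + β) ^ 2 - 3 * β * K ^ 2 ↔
      0 < β ^ 2 * (8 * β ^ 10 * K ^ 3 + 64 * β ^ 10 + 144 * β ^ 9 * K ^ 3 + 576 * β ^ 9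
        + 792 * β ^ 8 * K ^ 3 + 2304 * β ^ 8 - 27 * β ^ 7 * K ^ 6 + 2184 * β ^ 7 * K ^ 3
        + 5376 * β ^ 7 - 81 * β ^ 6 * K ^ 6 + 3528 * β ^ 6 * K ^ 3 + 8064 * β ^ 6
        - 81 * β ^ 5 * K ^ 6 + 3528 * β ^ 5 * K ^ 3 + 8064 * β ^ 5 - 27 * β ^ 4 * K ^ 6
        + 2184 * β ^ 4 * K ^ 3 + 5376 * β ^ 4 + 792 * β ^ 3 * K ^ 3 + 2304 * β ^ 3
        + 144 * β ^ 2 * K ^ 3 + 576 * β ^ 2 + 8 * β * K ^ 3 + 64 * β) := by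
  set h : ℝ := β ^ 3 * (1 + β) ^ 3 *
      ((3 * β * K ^ 2 + (1 + β) ^ 2 * (K + 2)) ^ 2 + 3 * (1 + β) ^ 4 * (K - 2) ^ 2) with hh
  have hβ1 : (0:ℝ) < 1 + β := by linarith
  have hpos : 0 < h := by
    rcases eq_or_ne K 2 with hK | hK
    · have : 0 < (3 * β * K ^ 2 + (1 + β) ^ 2 * (K + 2)) ^ 2 := by
        subst hK; positivity
      have h2 : (0:ℝ) ≤ 3 * (1 + β) ^ 4 * (K - 2) ^ 2 := by positivity
      rw [hh]; positivity
    · have h1 : (0:ℝ) ≤ (3 * β * K ^ 2 + (1 + β) ^ 2 * (K + 2)) ^ 2 := sq_nonneg _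
      have h2 : (0:ℝ) < 3 * (1 + β) ^ 4 * (K - 2) ^ 2 := by
        have : K - 2 ≠ 0 := sub_ne_zero.mpr hK
        positivity
      rw [hh]; positivity
  have key : β ^ 2 * (8 * β ^ 10 * K ^ 3 + 64 * β ^ 10 + 144 * β ^ 9 * K ^ 3 + 576 * β ^ 9
        + 792 * β ^ 8 * K ^ 3 + 2304 * β ^ 8 - 27 * β ^ 7 * K ^ 6 + 2184 * β ^ 7 * K ^ 3
        + 5376 * β ^ 7 - 81 * β ^ 6 * K ^ 6 + 3528 * β ^ 6 * K ^ 3 + 8064 * β ^ 6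
        - 81 * β ^ 5 * K ^ 6 + 3528 * β ^ 5 * K ^ 3 + 8064 * β ^ 5 - 27 * β ^ 4 * K ^ 6
        + 2184 * β ^ 4 * K ^ 3 + 5376 * β ^ 4 + 792 * β ^ 3 * K ^ 3 + 2304 * β ^ 3
        + 144 * β ^ 2 * K ^ 3 + 576 * β ^ 2 + 8 * β * K ^ 3 + 64 * β)
      = ((4 + 2 * K) * (1 + β) ^ 2 - 3 * β * K ^ 2) * h := by rw [hh]; ring
  rw [key]
  constructor
  · intro hf; exact mul_pos hf hpos
  · intro hg
    rcases mul_pos_iff.mp hg with ⟨a, _⟩ | ⟨_, b⟩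
    · exact a
    · linarith
end

section
/- Let n be odd. Consider the generalized n-gene repressilator in which each transcription-rate function has the successive-binding form a_i(p) = ḡ_i[(1 − δ_i)(∏_{j=1}^{m_i} K_{i,j})/B_i(p) + δ_i], where B_i(p) = Σ_{j=0}^{m_i} (∏_{ℓ=j+1}^{m_i} K_{i,ℓ}) p^j, with m_i ≥ 1, K_{i,j} > 0, ḡ_i > 0, and 0 ≤ δ_i < 1, and in which the degradation-rate and translation-rate functions satisfy (D1)–(D3) and assumption (A6) holds. Then the system has exactly one steady state in (0,∞)^{2n} (the central steady state E_C exists and is the unique positive steady state). -/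
open Set Function

section PositiveInverse

variable {f : ℝ → ℝ}

theorem exists_pos_eq_of_lt (hf : ContinuousOn f (Ici 0)) (h0 : f 0 = 0) {v X : ℝ}
    (hv : 0 < v) (hX : 0 ≤ X) (hvX : v < f X) : ∃ y ∈ Ioi 0, f y = v := by
  obtain ⟨y, hy, hfy⟩ :=
    intermediate_value_Ioc hX (hf.mono Icc_subset_Ici_self) ⟨by rwa [h0], hvX.le⟩
  exact ⟨y, hy.1, hfy⟩

theorem invFunOn_Ioi_spec (hf : ContinuousOn f (Ici 0)) (h0 : f 0 = 0) {v X : ℝ}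
    (hv : 0 < v) (hX : 0 ≤ X) (hvX : v < f X) :
    0 < invFunOn f (Ioi 0) v ∧ f (invFunOn f (Ioi 0) v) = v :=
  invFunOn_pos (exists_pos_eq_of_lt hf h0 hv hX hvX)

theorem StrictMonoOn.continuousOn_of_comp_eq {φ g : ℝ → ℝ} {s : Set ℝ}
    (hf : StrictMonoOn f (Ioi 0)) (hφ : MapsTo φ s (Ioi 0)) (hfφ : ∀ x ∈ s, f (φ x) = g x)
    (hg : ContinuousOn g s) : ContinuousOn φ s := by
  have lt_iff : ∀ z ∈ s, ∀ c ∈ Ioi (0 : ℝ), (f c < g z ↔ c < φ z) := fun z hz c hc => by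
    rw [← hfφ z hz]; exact hf.lt_iff_lt hc (hφ hz)
  have gt_iff : ∀ z ∈ s, ∀ c ∈ Ioi (0 : ℝ), (g z < f c ↔ φ z < c) := fun z hz c hc => by
    rw [← hfφ z hz]; exact hf.lt_iff_lt (hφ hz) hc
  intro x hx
  refine tendsto_order.2 ⟨fun b hb => ?_, fun b hb => ?_⟩
  · -- `b` may be negative, so compare with a point of `(0, φ x)` above it
    set c := max b (φ x / 2)
    have hc : c ∈ Ioi (0 : ℝ) := mem_Ioi.2 <| lt_max_of_lt_right (half_pos (hφ hx))
    have hcx : c < φ x := max_lt hb (half_lt_self (hφ hx))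
    filter_upwards [hg x hx (Ioi_mem_nhds ((lt_iff x hx c hc).2 hcx)), self_mem_nhdsWithin]
      with z hz hzs
    exact (le_max_left _ _).trans_lt ((lt_iff z hzs c hc).1 hz)
  · have hb0 : b ∈ Ioi (0 : ℝ) := (hφ hx).trans hb
    filter_upwards [hg x hx (Iio_mem_nhds ((gt_iff x hx b hb0).2 hb)), self_mem_nhdsWithin]
      with z hz hzs
    exact (gt_iff z hzs b hb0).1 hz

end PositiveInverse

section CompChain

variable {α : Type*}

def compChain (P : ℕ → α → α) : ℕ → α → α
  | 0 => id
  | j + 1 => P (j + 1) ∘ compChain P j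

variable {P : ℕ → α → α} {s : Set α}

@[simp]
theorem compChain_zero (x : α) : compChain P 0 x = x := rfl

@[simp]
theorem compChain_succ (j : ℕ) (x : α) :
    compChain P (j + 1) x = P (j + 1) (compChain P j x) := rfl

theorem mapsTo_compChain (hm : ∀ j, MapsTo (P j) s s) : ∀ j, MapsTo (compChain P j) s s
  | 0 => mapsTo_id s
  | j + 1 => (hm (j + 1)).comp (mapsTo_compChain hm j)

theorem continuousOn_compChain [TopologicalSpace α] (hc : ∀ j, ContinuousOn (P j) s)
    (hm : ∀ j, MapsTo (P j) s s) : ∀ j, ContinuousOn (compChain P j) s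
  | 0 => continuousOn_id
  | j + 1 => (hc (j + 1)).comp (continuousOn_compChain hc hm j) (mapsTo_compChain hm j)

theorem strictAntiOn_compChain [Preorder α] (ha : ∀ j, StrictAntiOn (P j) s)
    (hm : ∀ j, MapsTo (P j) s s) {j : ℕ} (hj : Odd j) : StrictAntiOn (compChain P j) s := by
  suffices ∀ j, (Even j → StrictMonoOn (compChain P j) s) ∧
      (Odd j → StrictAntiOn (compChain P j) s) from (this j).2 hj
  intro j
  induction j with
  | zero => exact ⟨fun _ => strictMonoOn_id, fun h => absurd h (by simp)⟩
  | succ j ih =>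
    refine ⟨fun he => (ha (j + 1)).comp (ih.2 ?_) (mapsTo_compChain hm j),
      fun ho => (ha (j + 1)).comp_strictMonoOn (ih.1 ?_) (mapsTo_compChain hm j)⟩
    · simpa [Nat.even_add_one] using he
    · simpa [Nat.odd_add_one] using ho

theorem periodic_compChain {n : ℕ} (hP : Periodic P n) {x : α} (hx : compChain P n x = x) :
    Periodic (fun j => compChain P j x) n := by
  intro j
  induction j with
  | zero => simpa using hx
  | succ j ih =>
    simp only at ih ⊢
    rw [Nat.add_right_comm, compChain_succ, ih, Nat.add_right_comm, hP]
    rfl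

end CompChain

theorem existsUnique_fixedPoint_of_strictAntiOn {f : ℝ → ℝ} (hc : ContinuousOn f (Ici 0))
    (hf0 : 0 ≤ f 0) (ha : StrictAntiOn f (Ici 0)) : ∃! c, 0 ≤ c ∧ f c = c := by
  have hff0 : f (f 0) ≤ f 0 := ha.antitoneOn self_mem_Ici hf0 hf0
  obtain ⟨c, hc_mem, hfc⟩ : ∃ c ∈ Icc 0 (f 0), f c - c = 0 :=
    intermediate_value_Icc' hf0 ((hc.mono Icc_subset_Ici_self).sub continuousOn_id)
      ⟨by simp only [Pi.sub_apply, id]; linarith, by simpa using hf0⟩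
  refine ⟨c, ⟨hc_mem.1, by linarith⟩, fun y ⟨hy, hfy⟩ => ?_⟩
  rcases lt_trichotomy y c with h | h | h
  · linarith [ha hy hc_mem.1 h]
  · exact h
  · linarith [ha hc_mem.1 hy h]

open Fin.NatCast in
theorem existsUnique_cyclic_of_strictAntiOn {n : ℕ} [NeZero n] (hn : Odd n) {P : Fin n → ℝ → ℝ}
    (hc : ∀ i, ContinuousOn (P i) (Ici 0)) (hm : ∀ i, MapsTo (P i) (Ici 0) (Ioi 0))
    (ha : ∀ i, StrictAntiOn (P i) (Ici 0)) :
    ∃! p : Fin n → ℝ, (∀ i, 0 < p i) ∧ ∀ i, p i = P i (p (i - 1)) := by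
  set Q : ℕ → ℝ → ℝ := fun j => P j
  have hQm : ∀ j, MapsTo (Q j) (Ici 0) (Ici 0) := fun j => (hm j).mono_right Ioi_subset_Ici_self
  obtain ⟨c, ⟨hc0, hcfix⟩, hc_uniq⟩ := existsUnique_fixedPoint_of_strictAntiOn
    (continuousOn_compChain (fun j => hc j) hQm n) (mapsTo_compChain hQm n self_mem_Ici)
    (strictAntiOn_compChain (fun j => ha j) hQm hn)
  have hchain : ∀ p : Fin n → ℝ, (∀ i, p i = P i (p (i - 1))) →
      ∀ j : ℕ, compChain Q j (p 0) = p j := by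
    intro p hp j
    induction j with
    | zero => simp
    | succ j ih => rw [compChain_succ, ih, hp (j + 1 : ℕ)]; simp [Q]
  -- the chain started at the fixed point is `n`-periodic, which closes the cycle at `i = 0`
  have hperiodic : Periodic (fun j => compChain Q j c) n :=
    periodic_compChain (fun j => by simp [Q]) hcfix
  have hmod : ∀ j : ℕ, compChain Q ((j : Fin n) : ℕ) c = compChain Q j c := fun j => by
    rw [Fin.val_natCast]
    simpa [Nat.mod_add_div'] using (hperiodic.nat_mul (j / n) (j % n)).symm
  have hsol : ∀ i : Fin n, compChain Q i c = P i (compChain Q (i - 1 : Fin n) c) := fun i => by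
    have hi : ((((i - 1 : Fin n) : ℕ) + 1 : ℕ) : Fin n) = i := by simp
    conv_lhs => rw [← hi, hmod, compChain_succ]
    simp only [Q, hi]
  refine ⟨fun i => compChain Q i c, ⟨fun i => ?_, hsol⟩, fun p ⟨hp_pos, hp⟩ => ?_⟩
  · show 0 < compChain Q i c
    rw [hsol i]
    exact hm i (mapsTo_compChain hQm _ hc0)
  · have hp0 : p 0 = c := hc_uniq _ ⟨(hp_pos 0).le, by simpa using hchain p hp n⟩
    funext i
    rw [← hp0, hchain p hp, Fin.cast_val_eq_self]

section SuccessiveBinding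

def bindingPolynomial (K : ℕ → ℝ) (m : ℕ) (x : ℝ) : ℝ :=
  ∑ j ∈ Finset.range (m + 1), (∏ ℓ ∈ Finset.Icc (j + 1) m, K ℓ) * x ^ j

noncomputable def successiveBindingRate (g δ : ℝ) (K : ℕ → ℝ) (m : ℕ) (x : ℝ) : ℝ :=
  g * ((1 - δ) * (∏ ℓ ∈ Finset.Icc 1 m, K ℓ) / bindingPolynomial K m x + δ)

variable {K : ℕ → ℝ} {m : ℕ} {g δ : ℝ}

theorem prod_Icc_succ_pos (hK : ∀ ℓ, 1 ≤ ℓ → ℓ ≤ m → 0 < K ℓ) (j : ℕ) :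
    0 < ∏ ℓ ∈ Finset.Icc (j + 1) m, K ℓ :=
  Finset.prod_pos fun ℓ hℓ => hK ℓ (by grind) (Finset.mem_Icc.1 hℓ).2

theorem bindingPolynomial_pos (hK : ∀ ℓ, 1 ≤ ℓ → ℓ ≤ m → 0 < K ℓ) {x : ℝ} (hx : 0 ≤ x) :
    0 < bindingPolynomial K m x :=
  Finset.sum_pos' (fun j _ => mul_nonneg (prod_Icc_succ_pos hK j).le (pow_nonneg hx j))
    ⟨0, by simp, by simpa using prod_Icc_succ_pos hK 0⟩

theorem strictMonoOn_bindingPolynomial (hK : ∀ ℓ, 1 ≤ ℓ → ℓ ≤ m → 0 < K ℓ) (hm : 1 ≤ m) :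
    StrictMonoOn (bindingPolynomial K m) (Ici 0) := fun x hx y _ hxy =>
  Finset.sum_lt_sum
    (fun j _ =>
      mul_le_mul_of_nonneg_left (pow_le_pow_left₀ hx hxy.le j) (prod_Icc_succ_pos hK j).le)
    ⟨m, Finset.self_mem_range_succ m, by simpa using pow_lt_pow_left₀ hxy hx (by omega)⟩

theorem successiveBindingRate_pos (hK : ∀ ℓ, 1 ≤ ℓ → ℓ ≤ m → 0 < K ℓ) (hg : 0 < g)
    (hδ0 : 0 ≤ δ) (hδ1 : δ < 1) {x : ℝ} (hx : 0 ≤ x) : 0 < successiveBindingRate g δ K m x := by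
  have := div_pos (mul_pos (sub_pos.2 hδ1) (prod_Icc_succ_pos hK 0)) (bindingPolynomial_pos hK hx)
  unfold successiveBindingRate
  positivity

theorem strictAntiOn_successiveBindingRate (hK : ∀ ℓ, 1 ≤ ℓ → ℓ ≤ m → 0 < K ℓ) (hm : 1 ≤ m)
    (hg : 0 < g) (hδ1 : δ < 1) : StrictAntiOn (successiveBindingRate g δ K m) (Ici 0) :=
  fun x hx y hy hxy => by
    have := div_lt_div_of_pos_left (mul_pos (sub_pos.2 hδ1) (prod_Icc_succ_pos hK 0))
      (bindingPolynomial_pos hK hx) (strictMonoOn_bindingPolynomial hK hm hx hy hxy)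
    unfold successiveBindingRate
    gcongr

theorem continuousOn_successiveBindingRate (hK : ∀ ℓ, 1 ≤ ℓ → ℓ ≤ m → 0 < K ℓ) :
    ContinuousOn (successiveBindingRate g δ K m) (Ici 0) := by
  have hB : Continuous (bindingPolynomial K m) := by unfold bindingPolynomial; fun_prop
  exact continuousOn_const.mul <| (continuousOn_const.div hB.continuousOn
    fun x hx => (bindingPolynomial_pos hK hx).ne').add continuousOn_const

end SuccessiveBinding

-- the positive solution `r` of `dr r = a x`; a junk value when there is none
noncomputable def mrnaResponse (a dr : ℝ → ℝ) (x : ℝ) : ℝ := invFunOn dr (Ioi 0) (a x)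

noncomputable def proteinResponse (a dr dp k : ℝ → ℝ) (x : ℝ) : ℝ :=
  invFunOn dp (Ioi 0) (k (mrnaResponse a dr x))

structure IsRepressilatorGene (a dr dp k : ℝ → ℝ) (rbar : ℝ) : Prop where
  continuousOn_a : ContinuousOn a (Ici 0)
  strictAntiOn_a : StrictAntiOn a (Ici 0)
  a_pos : ∀ x, 0 ≤ x → 0 < a x
  continuousOn_dr : ContinuousOn dr (Ici 0)
  continuousOn_dp : ContinuousOn dp (Ici 0)
  continuousOn_k : ContinuousOn k (Ici 0)
  dr_zero : dr 0 = 0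
  dp_zero : dp 0 = 0
  k_zero : k 0 = 0
  strictMonoOn_dr : StrictMonoOn dr (Ici 0)
  strictMonoOn_dp : StrictMonoOn dp (Ici 0)
  strictMonoOn_k : StrictMonoOn k (Ici 0)
  rbar_pos : 0 < rbar
  dr_rbar : dr rbar = a 0
  exists_dr_gt : ∃ x ≥ 0, a 0 < dr x
  exists_dp_gt : ∃ x ≥ 0, k rbar < dp x

namespace IsRepressilatorGene

variable {a dr dp k : ℝ → ℝ} {rbar : ℝ}

theorem mrnaResponse_spec (h : IsRepressilatorGene a dr dp k rbar) {x : ℝ} (hx : 0 ≤ x) :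
    0 < mrnaResponse a dr x ∧ dr (mrnaResponse a dr x) = a x := by
  obtain ⟨X, hX, hdrX⟩ := h.exists_dr_gt
  exact invFunOn_Ioi_spec h.continuousOn_dr h.dr_zero (h.a_pos x hx) hX
    ((h.strictAntiOn_a.antitoneOn self_mem_Ici hx hx).trans_lt hdrX)

theorem mrnaResponse_le (h : IsRepressilatorGene a dr dp k rbar) {x : ℝ} (hx : 0 ≤ x) :
    mrnaResponse a dr x ≤ rbar := by
  obtain ⟨hpos, hdr⟩ := h.mrnaResponse_spec hx
  rw [← h.strictMonoOn_dr.le_iff_le hpos.le h.rbar_pos.le, hdr, h.dr_rbar]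
  exact h.strictAntiOn_a.antitoneOn self_mem_Ici hx hx

theorem proteinResponse_spec (h : IsRepressilatorGene a dr dp k rbar) {x : ℝ} (hx : 0 ≤ x) :
    0 < proteinResponse a dr dp k x ∧
      dp (proteinResponse a dr dp k x) = k (mrnaResponse a dr x) := by
  obtain ⟨Y, hY, hdpY⟩ := h.exists_dp_gt
  have hR := (h.mrnaResponse_spec hx).1
  refine invFunOn_Ioi_spec h.continuousOn_dp h.dp_zero ?_ hY ?_
  · simpa [h.k_zero] using h.strictMonoOn_k self_mem_Ici hR.le hR
  · exact (h.strictMonoOn_k.monotoneOn hR.le h.rbar_pos.le (h.mrnaResponse_le hx)).trans_lt hdpY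

theorem strictAntiOn_mrnaResponse (h : IsRepressilatorGene a dr dp k rbar) :
    StrictAntiOn (mrnaResponse a dr) (Ici 0) := fun x hx y hy hxy => by
  rw [← h.strictMonoOn_dr.lt_iff_lt (h.mrnaResponse_spec hy).1.le (h.mrnaResponse_spec hx).1.le,
    (h.mrnaResponse_spec hx).2, (h.mrnaResponse_spec hy).2]
  exact h.strictAntiOn_a hx hy hxy

theorem strictAntiOn_proteinResponse (h : IsRepressilatorGene a dr dp k rbar) :
    StrictAntiOn (proteinResponse a dr dp k) (Ici 0) := fun x hx y hy hxy => by
  rw [← h.strictMonoOn_dp.lt_iff_lt (h.proteinResponse_spec hy).1.le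
    (h.proteinResponse_spec hx).1.le, (h.proteinResponse_spec hx).2, (h.proteinResponse_spec hy).2]
  exact h.strictMonoOn_k (h.mrnaResponse_spec hy).1.le (h.mrnaResponse_spec hx).1.le
    (h.strictAntiOn_mrnaResponse hx hy hxy)

theorem continuousOn_proteinResponse (h : IsRepressilatorGene a dr dp k rbar) :
    ContinuousOn (proteinResponse a dr dp k) (Ici 0) := by
  have hR : ContinuousOn (mrnaResponse a dr) (Ici 0) :=
    (h.strictMonoOn_dr.mono Ioi_subset_Ici_self).continuousOn_of_comp_eq
      (fun _ hx => (h.mrnaResponse_spec hx).1) (fun _ hx => (h.mrnaResponse_spec hx).2)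
      h.continuousOn_a
  exact (h.strictMonoOn_dp.mono Ioi_subset_Ici_self).continuousOn_of_comp_eq
    (fun _ hx => (h.proteinResponse_spec hx).1) (fun _ hx => (h.proteinResponse_spec hx).2)
    (h.continuousOn_k.comp hR fun _ hx => (h.mrnaResponse_spec hx).1.le)

end IsRepressilatorGene

theorem isSteadyState_iff {n : ℕ} [NeZero n] {a dr dp k : Fin n → ℝ → ℝ} {rbar : Fin n → ℝ}
    (h : ∀ i, IsRepressilatorGene (a i) (dr i) (dp i) (k i) (rbar i)) {r p : Fin n → ℝ} :
    IsSteadyState n a dr dp k r p ↔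
      ((∀ i, 0 < p i) ∧ ∀ i, p i = proteinResponse (a i) (dr i) (dp i) (k i) (p (i - 1))) ∧
        r = fun i => mrnaResponse (a i) (dr i) (p (i - 1)) := by
  constructor
  · rintro ⟨hr, hp, hdr, hdp⟩
    have hR := fun i => (h i).mrnaResponse_spec (hp (i - 1)).le
    have hP := fun i => (h i).proteinResponse_spec (hp (i - 1)).le
    have hr_eq : ∀ i, r i = mrnaResponse (a i) (dr i) (p (i - 1)) := fun i =>
      (h i).strictMonoOn_dr.injOn (hr i).le (hR i).1.le (by rw [hdr, (hR i).2])
    refine ⟨⟨hp, fun i => (h i).strictMonoOn_dp.injOn (hp i).le (hP i).1.le ?_⟩, funext hr_eq⟩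
    rw [hdp, (hP i).2, hr_eq]
  · rintro ⟨⟨hp, hpP⟩, rfl⟩
    refine ⟨fun i => ((h i).mrnaResponse_spec (hp (i - 1)).le).1, hp,
      fun i => ((h i).mrnaResponse_spec (hp (i - 1)).le).2, fun i => ?_⟩
    rw [hpP i]
    exact ((h i).proteinResponse_spec (hp (i - 1)).le).2

theorem ExistsUnique.prod_graph {β γ : Type*} {Q : γ → Prop} (F : γ → β) (h : ∃! y, Q y) :
    ∃! x : β × γ, Q x.2 ∧ x.1 = F x.2 := by
  obtain ⟨y, hy, huniq⟩ := h
  refine ⟨(F y, y), ⟨hy, rfl⟩, fun ⟨b, c⟩ ⟨hc, hb⟩ => ?_⟩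
  obtain rfl := huniq c hc
  simp_all

/-- For `n` odd, the generalized `n`-gene repressilator in which each
transcription-rate function has the successive-binding form
`a_i(p) = ḡ_i[(1−δ_i)(∏_{j=1}^{m_i} K_{i,j})/B_i(p) + δ_i]`, with
`B_i(p) = Σ_{j=0}^{m_i} (∏_{ℓ=j+1}^{m_i} K_{i,ℓ}) p^j`, `m_i ≥ 1`, `K_{i,j} > 0`,
`ḡ_i > 0`, `0 ≤ δ_i < 1`, whose degradation- and translation-rate functions
satisfy (D1)–(D3), and for which assumption (A6) holds, has exactly one steady
state in `(0,∞)^{2n}` (the central steady state `E_C`). -/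
theorem successive_binding_unique_steady_state (n : ℕ) [NeZero n] (hn : Odd n)
    (m : Fin n → ℕ) (hm : ∀ i, 1 ≤ m i)
    (K : Fin n → ℕ → ℝ) (hK : ∀ i ℓ, 1 ≤ ℓ → ℓ ≤ m i → 0 < K i ℓ)
    (g δ : Fin n → ℝ) (hg : ∀ i, 0 < g i) (hδ0 : ∀ i, 0 ≤ δ i) (hδ1 : ∀ i, δ i < 1)
    (a dr dp k : Fin n → ℝ → ℝ)
    -- each `a i` is the successive-binding transcription-rate function
    (ha : ∀ i p, a i p = g i * ((1 - δ i) * (∏ ℓ ∈ Finset.Icc 1 (m i), K i ℓ) /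
      (∑ j ∈ Finset.range (m i + 1), (∏ ℓ ∈ Finset.Icc (j + 1) (m i), K i ℓ) * p ^ j)
      + δ i))
    -- (D1)–(D3)
    (hD1 : ∀ i, ContDiffOn ℝ 1 (dr i) (Set.Ici 0) ∧ ContDiffOn ℝ 1 (dp i) (Set.Ici 0) ∧
      ContDiffOn ℝ 1 (k i) (Set.Ici 0))
    (hD2 : ∀ i, dr i 0 = 0 ∧ dp i 0 = 0 ∧ k i 0 = 0)
    (hD3 : ∀ i, StrictMonoOn (dr i) (Set.Ici 0) ∧ StrictMonoOn (dp i) (Set.Ici 0) ∧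
      StrictMonoOn (k i) (Set.Ici 0))
    -- `rbar i` is the unique point in `(0,∞)` with `dr i (rbar i) = a i 0`
    (rbar : Fin n → ℝ) (hrbar_pos : ∀ i, 0 < rbar i)
    (hrbar : ∀ i, dr i (rbar i) = a i 0)
    -- (A6)
    (hA6 : ∀ i, (∃ x ≥ (0 : ℝ), dr i x > a i 0) ∧ (∃ x ≥ (0 : ℝ), dp i x > k i (rbar i))) :
    ∃! rp : (Fin n → ℝ) × (Fin n → ℝ), IsSteadyState n a dr dp k rp.1 rp.2 := by
  have hgene : ∀ i, IsRepressilatorGene (a i) (dr i) (dp i) (k i) (rbar i) := fun i => by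
    have ha_eq : a i = successiveBindingRate (g i) (δ i) (K i) (m i) := funext (ha i)
    refine ⟨?_, ?_, ?_, (hD1 i).1.continuousOn, (hD1 i).2.1.continuousOn,
      (hD1 i).2.2.continuousOn, (hD2 i).1, (hD2 i).2.1, (hD2 i).2.2, (hD3 i).1, (hD3 i).2.1,
      (hD3 i).2.2, hrbar_pos i, hrbar i, (hA6 i).1, (hA6 i).2⟩ <;> rw [ha_eq]
    · exact continuousOn_successiveBindingRate (hK i)
    · exact strictAntiOn_successiveBindingRate (hK i) (hm i) (hg i) (hδ1 i)
    · exact fun x => successiveBindingRate_pos (hK i) (hg i) (hδ0 i) (hδ1 i)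
  simp_rw [isSteadyState_iff hgene]
  exact ExistsUnique.prod_graph (fun p i => mrnaResponse (a i) (dr i) (p (i - 1))) <|
    existsUnique_cyclic_of_strictAntiOn hn
      (fun i => (hgene i).continuousOn_proteinResponse)
      (fun i x hx => ((hgene i).proteinResponse_spec hx).1)
      (fun i => (hgene i).strictAntiOn_proteinResponse)
end
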